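/- arXiv:1806.00406 — 7 statements merged into one kernel-verified Lean document; each statement's English description precedes it below -/
import Mathlib

section
/- Let (P_k)_{k∈ℕ} be a sequence of real symmetric positive semidefinite n×n matrices such that the series ∑_{k} P_k is summable with sum P. Then the range of P equals the supremum over k ∈ ℕ of the ranges of the P_k, i.e. range P = ⨆_{k∈ℕ} range(P_k). -/
/-!
The sum `S` is Hermitian. If `S x = 0`, the nonnegative numbers `x⋆ P k x` sum to `x⋆ S x = 0`, so
all vanish and `P k x = 0`; thus `ker S ≤ ker P k`, which for Hermitian matrices says
`range P k ≤ range S`, because the range is the orthogonal complement of the kernel. Conversely,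
`S v = ∑ P k v` lies in the closed subspace `⨆ k, range (P k)`.
-/

open Matrix

namespace LinearMap.IsSymmetric

variable {𝕜 E : Type*} [RCLike 𝕜] [NormedAddCommGroup E] [InnerProductSpace 𝕜 E]
  [FiniteDimensional 𝕜 E]

theorem range_le_range_of_ker_le {S T : E →ₗ[𝕜] E} (hS : S.IsSymmetric) (hT : T.IsSymmetric)
    (h : LinearMap.ker T ≤ LinearMap.ker S) : LinearMap.range S ≤ LinearMap.range T := by
  rw [← (LinearMap.range S).orthogonal_orthogonal, ← (LinearMap.range T).orthogonal_orthogonal,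
    hS.orthogonal_range, hT.orthogonal_range]
  exact Submodule.orthogonal_le h

end LinearMap.IsSymmetric

theorem HasSum.matrix_mulVec {ι R m n : Type*} [Fintype n] [Semiring R] [TopologicalSpace R]
    [IsTopologicalSemiring R] {f : ι → Matrix m n R} {a : Matrix m n R} (hf : HasSum f a)
    (v : n → R) : HasSum (fun i => f i *ᵥ v) (a *ᵥ v) :=
  hf.map (mulVec.addMonoidHomLeft v) (continuous_id.matrix_mulVec continuous_const)

namespace Matrix

theorem isHermitian_of_hasSum {ι α n : Type*} [AddCommMonoid α] [StarAddMonoid α]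
    [TopologicalSpace α] [ContinuousStar α] [T2Space α] {P : ι → Matrix n n α} {S : Matrix n n α}
    (hP : ∀ i, (P i).IsHermitian) (hS : HasSum P S) : S.IsHermitian := by
  refine hS.matrix_conjTranspose.unique ?_
  simpa only [(hP _).eq] using hS

theorem range_mulVecLin_le_iSup_of_hasSum {ι 𝕜 m n : Type*} [NontriviallyNormedField 𝕜]
    [CompleteSpace 𝕜] [Finite m] [Fintype n] {P : ι → Matrix m n 𝕜} {S : Matrix m n 𝕜}
    (hS : HasSum P S) : LinearMap.range S.mulVecLin ≤ ⨆ i, LinearMap.range (P i).mulVecLin := by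
  rintro _ ⟨v, rfl⟩
  rw [mulVecLin_apply, ← (hS.matrix_mulVec v).tsum_eq]
  exact tsum_mem (Submodule.closed_of_finiteDimensional _) fun i =>
    Submodule.mem_iSup_of_mem i ⟨v, rfl⟩

variable {𝕜 ι n : Type*} [RCLike 𝕜] [Fintype n]

theorem IsHermitian.range_mulVecLin_le_of_ker_le [DecidableEq n] {A B : Matrix n n 𝕜}
    (hA : A.IsHermitian) (hB : B.IsHermitian)
    (h : LinearMap.ker B.mulVecLin ≤ LinearMap.ker A.mulVecLin) :
    LinearMap.range A.mulVecLin ≤ LinearMap.range B.mulVecLin := by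
  have hE : LinearMap.range (toEuclideanLin A) ≤ LinearMap.range (toEuclideanLin B) := by
    refine (isSymmetric_toEuclideanLin_iff.mpr hA).range_le_range_of_ker_le
      (isSymmetric_toEuclideanLin_iff.mpr hB) fun x hx => ?_
    have hAx : A *ᵥ WithLp.ofLp x = 0 := h (congrArg WithLp.ofLp hx)
    exact congrArg (WithLp.toLp 2) hAx
  rintro _ ⟨v, rfl⟩
  obtain ⟨w, hw⟩ := hE ⟨WithLp.toLp 2 v, rfl⟩
  exact ⟨WithLp.ofLp w, congrArg WithLp.ofLp hw⟩

open scoped ComplexOrder in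
theorem ker_mulVecLin_le_of_hasSum_of_posSemidef {P : ι → Matrix n n 𝕜} {S : Matrix n n 𝕜}
    (hP : ∀ i, (P i).PosSemidef) (hS : HasSum P S) (i : ι) :
    LinearMap.ker S.mulVecLin ≤ LinearMap.ker (P i).mulVecLin := by
  intro x (hx : S *ᵥ x = 0)
  have hquad : HasSum (fun j => star x ⬝ᵥ (P j *ᵥ x)) 0 := by
    simpa [Function.comp_def, hx] using (hS.matrix_mulVec x).map (dotProductBilin 𝕜 𝕜 (star x))
      (continuous_const.dotProduct continuous_id)
  have hPx : star x ⬝ᵥ (P i *ᵥ x) = 0 :=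
    congrFun ((hasSum_zero_iff_of_nonneg fun j => (hP j).dotProduct_mulVec_nonneg x).mp hquad) i
  exact ((hP i).dotProduct_mulVec_zero_iff x).mp hPx

end Matrix

theorem range_of_summable_psd_sum
    {n : ℕ} (P : ℕ → Matrix (Fin n) (Fin n) ℝ) (hP : ∀ k, (P k).PosSemidef)
    (S : Matrix (Fin n) (Fin n) ℝ) (hS : HasSum P S) :
    LinearMap.range S.mulVecLin = ⨆ k : ℕ, LinearMap.range (P k).mulVecLin := by
  have hSherm : S.IsHermitian := isHermitian_of_hasSum (fun k => (hP k).isHermitian) hS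
  refine le_antisymm (range_mulVecLin_le_iSup_of_hasSum hS) (iSup_le fun k => ?_)
  exact (hP k).isHermitian.range_mulVecLin_le_of_ker_le hSherm
    (ker_mulVecLin_le_of_hasSum_of_posSemidef hP hS k)
end

section
/- Let A_1, …, A_M be real n×n matrices with A := A_1 Hurwitz, set D_j := A_j − A_1 for j = 1,…,M, and let B_1, …, B_M be real n×m matrices. Define P_1 as the unique symmetric positive semidefinite solution of A·P_1 + P_1·Aᵀ + ∑_{j=1}^{M} B_j·B_jᵀ = 0 and, for k ≥ 2, P_k as the unique symmetric positive semidefinite solution of A·P_k + P_k·Aᵀ + ∑_{j=1}^{M} D_j·P_{k−1}·D_jᵀ = 0. If the series ∑_{k≥1} P_k is summable with sum P, then the range of P equals the span of all columns of matrices of the form M_s ⋯ M_1 · B_{i_0}, where s ≥ 0, each M_t belongs to {D_1, …, D_M, A}, i_0 ∈ {1,…,M}, and the empty product is the identity matrix. -/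
/-!
Both sides are compared through their orthogonal complements for the dot product. As `S` is a
sum of positive semidefinite matrices, `ker S = ⋂ₖ ker Pₖ` and `range S = (ker S)ᗮ`.

If `A P + P Aᵀ + Q = 0` with `P, Q ⪰ 0` and `P w = 0`, then `Q w = 0` and `P Aᵀ w = 0`. Hence
`ker S` is invariant under `Aᵀ` and every `Dⱼᵀ` and is killed by every `Bᵢᵀ`, so the reachable
subspace `R` lies in `(ker S)ᗮ`.

Conversely, let `V` be an `Aᵀ`-invariant subspace killed by `Q`. On `V` the Lyapunov equation
makes `Aᵀ` skew-adjoint for `(x, y) ↦ x ⬝ P y`, so `p(Aᵀ)` is adjoint to `p(-Aᵀ)`. Since `A` is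
Hurwitz, `χ_A` and `χ_A(-X)` are coprime; writing `1 = u χ_A + v χ_A(-X)` and using
`χ_A(Aᵀ) = 0` gives `w ⬝ P w = 0`, i.e. `P w = 0`, for `w ∈ V`. Applied to `V = Rᗮ`, which is
invariant under `Aᵀ` and every `Dⱼᵀ`, this shows by induction that every `Pₖ` vanishes on `Rᗮ`.
-/

open Matrix

/-- A real square matrix is Hurwitz if every eigenvalue of it, viewed as a complex
matrix, has strictly negative real part. -/
def IsHurwitz {n : ℕ} (A : Matrix (Fin n) (Fin n) ℝ) : Prop :=
  ∀ μ ∈ spectrum ℂ (A.map (algebraMap ℝ ℂ)), μ.re < 0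

open Polynomial LinearMap

section DotOrthogonal

variable {K ι κ : Type*} [Field K] [Fintype ι] [Fintype κ]

theorem mulVec_dotProduct_eq (A : Matrix ι κ K) (u : κ → K) (v : ι → K) :
    (A *ᵥ u) ⬝ᵥ v = u ⬝ᵥ (Aᵀ *ᵥ v) := by
  rw [dotProduct_comm, dotProduct_mulVec, mulVec_transpose, dotProduct_comm]

abbrev dotOrthogonal (U : Submodule K (ι → K)) : Submodule K (ι → K) :=
  BilinForm.orthogonal (dotProductBilin K K) U

theorem mem_dotOrthogonal {U : Submodule K (ι → K)} {w : ι → K} :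
    w ∈ dotOrthogonal U ↔ ∀ x ∈ U, x ⬝ᵥ w = 0 :=
  Iff.rfl

theorem dotOrthogonal_dotOrthogonal (U : Submodule K (ι → K)) :
    dotOrthogonal (dotOrthogonal U) = U :=
  BilinForm.orthogonal_orthogonal (B := dotProductBilin K K)
    ⟨fun x hx => dotProduct_eq_zero x hx,
      fun y hy => dotProduct_eq_zero y fun x => (dotProduct_comm y x).trans (hy x)⟩
    (fun x y h => (dotProduct_comm y x).trans h) U

theorem dotOrthogonal_le_dotOrthogonal_iff {U V : Submodule K (ι → K)} :
    dotOrthogonal U ≤ dotOrthogonal V ↔ V ≤ U :=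
  ⟨fun h => by
    simpa only [dotOrthogonal_dotOrthogonal] using
      BilinForm.orthogonal_le (B := dotProductBilin K K) h,
    BilinForm.orthogonal_le⟩

theorem dotOrthogonal_range_mulVecLin (B : Matrix ι κ K) :
    dotOrthogonal (range B.mulVecLin) = ker Bᵀ.mulVecLin := by
  ext w
  simp only [mem_dotOrthogonal, mem_range, mulVecLin_apply, mem_ker, forall_exists_index,
    forall_apply_eq_imp_iff, mulVec_dotProduct_eq]
  rw [← dotProduct_eq_zero_iff]
  simp only [dotProduct_comm]

theorem range_mulVecLin_le_dotOrthogonal_iff (B : Matrix ι κ K) (U : Submodule K (ι → K)) :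
    range B.mulVecLin ≤ dotOrthogonal U ↔ U ≤ ker Bᵀ.mulVecLin := by
  rw [← dotOrthogonal_range_mulVecLin, ← dotOrthogonal_le_dotOrthogonal_iff,
    dotOrthogonal_dotOrthogonal]

theorem range_mulVecLin_eq_dotOrthogonal_ker {S : Matrix ι ι K} (hS : S.IsSymm) :
    range S.mulVecLin = dotOrthogonal (ker S.mulVecLin) := by
  rw [← hS.eq, ← dotOrthogonal_range_mulVecLin, dotOrthogonal_dotOrthogonal, hS.eq]

theorem mulVec_mem_dotOrthogonal {C : Matrix ι ι K} {U : Submodule K (ι → K)}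
    (hU : ∀ w ∈ U, Cᵀ *ᵥ w ∈ U) {x : ι → K} (hx : x ∈ dotOrthogonal U) :
    C *ᵥ x ∈ dotOrthogonal U := fun w hw => by
  have := mem_dotOrthogonal.1 hx _ (hU w hw)
  rwa [mulVec_dotProduct_eq, transpose_transpose] at this

end DotOrthogonal

section ReachableSubspace

variable {K ι κ α : Type*} [CommRing K] [Fintype ι] [DecidableEq ι] [Fintype κ]
  {G : Set (Matrix ι ι K)} {B : α → Matrix ι κ K}

variable (G B) in
def reachableSubspace : Submodule K (ι → K) :=
  ⨆ (L : List (Matrix ι ι K)) (_ : ∀ X ∈ L, X ∈ G) (i : α), range ((L.prod * B i).mulVecLin)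

theorem range_le_reachableSubspace (i : α) : range (B i).mulVecLin ≤ reachableSubspace G B := by
  refine le_iSup_of_le [] (le_iSup_of_le (by simp) (le_iSup_of_le i ?_))
  rw [List.prod_nil, Matrix.one_mul]

theorem mulVec_mem_reachableSubspace {C : Matrix ι ι K} (hC : C ∈ G) {x : ι → K}
    (hx : x ∈ reachableSubspace G B) : C *ᵥ x ∈ reachableSubspace G B := by
  suffices (reachableSubspace G B).map C.mulVecLin ≤ reachableSubspace G B from this ⟨x, hx, rfl⟩
  simp only [reachableSubspace, Submodule.map_iSup]
  refine iSup_le fun L => iSup_le fun hL => iSup_le fun i => ?_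
  rw [← range_comp, ← mulVecLin_mul, ← Matrix.mul_assoc, ← List.prod_cons]
  refine le_iSup_of_le (C :: L) (le_iSup_of_le ?_ (le_iSup_of_le i le_rfl))
  simpa [hC] using hL

theorem reachableSubspace_le {U : Submodule K (ι → K)} (hB : ∀ i, range (B i).mulVecLin ≤ U)
    (hG : ∀ C ∈ G, ∀ x ∈ U, C *ᵥ x ∈ U) : reachableSubspace G B ≤ U := by
  refine iSup_le fun L => iSup_le fun hL => iSup_le fun i => ?_
  rintro _ ⟨y, rfl⟩
  induction L with
  | nil => simpa using hB i ⟨y, rfl⟩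
  | cons C L ih =>
    rw [mulVecLin_apply, List.prod_cons, Matrix.mul_assoc, ← mulVec_mulVec]
    simp only [List.mem_cons, forall_eq_or_imp] at hL
    exact hG C hL.1 _ (ih hL.2)

end ReachableSubspace

theorem isSymm_of_hasSum {ι α R : Type*} [AddCommMonoid R] [TopologicalSpace R] [T2Space R]
    {P : α → Matrix ι ι R} {S : Matrix ι ι R} (hS : HasSum P S)
    (hP : ∀ k, (P k).IsSymm) : S.IsSymm :=
  hS.matrix_transpose.unique (by simpa only [(hP _).eq] using hS)

section PosSemidef

variable {ι κ α : Type*} [Fintype ι] [Fintype κ]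

theorem Matrix.PosSemidef.mulVec_eq_zero_iff {P : Matrix ι ι ℝ} (hP : P.PosSemidef) (w : ι → ℝ) :
    P *ᵥ w = 0 ↔ w ⬝ᵥ (P *ᵥ w) = 0 := by
  simpa using (hP.dotProduct_mulVec_zero_iff w).symm

theorem Matrix.PosSemidef.dotProduct_mulVec_nonneg' {P : Matrix ι ι ℝ} (hP : P.PosSemidef)
    (w : ι → ℝ) : 0 ≤ w ⬝ᵥ (P *ᵥ w) := by
  simpa using hP.dotProduct_mulVec_nonneg w

theorem mulVec_eq_zero_of_sum_posSemidef {s : Finset α} {R : α → Matrix ι ι ℝ}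
    (hR : ∀ j ∈ s, (R j).PosSemidef) {w : ι → ℝ} (hw : (∑ j ∈ s, R j) *ᵥ w = 0) {j : α}
    (hj : j ∈ s) : R j *ᵥ w = 0 := by
  have hsum : ∑ j ∈ s, w ⬝ᵥ (R j *ᵥ w) = 0 := by
    rw [← dotProduct_sum, ← sum_mulVec, hw, dotProduct_zero]
  rw [Finset.sum_eq_zero_iff_of_nonneg fun j hj => (hR j hj).dotProduct_mulVec_nonneg' w] at hsum
  exact ((hR j hj).mulVec_eq_zero_iff w).2 (hsum j hj)

theorem Matrix.PosSemidef.mul_mul_transpose {P : Matrix κ κ ℝ} (hP : P.PosSemidef)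
    (X : Matrix ι κ ℝ) : (X * P * Xᵀ).PosSemidef := by
  simpa using hP.mul_mul_conjTranspose_same X

theorem Matrix.PosSemidef.sum_mul_mul_transpose {P : Matrix κ κ ℝ} (hP : P.PosSemidef)
    (X : α → Matrix ι κ ℝ) (s : Finset α) : (∑ j ∈ s, X j * P * (X j)ᵀ).PosSemidef :=
  posSemidef_sum s fun j _ => hP.mul_mul_transpose (X j)

theorem Matrix.PosSemidef.mulVec_transpose_eq_zero_of_sum {P : Matrix κ κ ℝ} (hP : P.PosSemidef)
    {X : α → Matrix ι κ ℝ} {s : Finset α} {w : ι → ℝ}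
    (hw : (∑ j ∈ s, X j * P * (X j)ᵀ) *ᵥ w = 0) {j : α} (hj : j ∈ s) :
    P *ᵥ ((X j)ᵀ *ᵥ w) = 0 := by
  have hXw : (X j * P * (X j)ᵀ) *ᵥ w = 0 :=
    mulVec_eq_zero_of_sum_posSemidef (fun j _ => hP.mul_mul_transpose (X j)) hw hj
  rw [hP.mulVec_eq_zero_iff, dotProduct_comm, ← mulVec_dotProduct_eq, mulVec_mulVec,
    mulVec_mulVec, hXw, zero_dotProduct]

theorem ker_mulVecLin_eq_iInf_of_hasSum {P : α → Matrix ι ι ℝ} {S : Matrix ι ι ℝ}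
    (hS : HasSum P S) (hP : ∀ k, (P k).PosSemidef) :
    ker S.mulVecLin = ⨅ k, ker (P k).mulVecLin := by
  ext w
  have hmulVec : HasSum (fun k => P k *ᵥ w) (S *ᵥ w) :=
    hS.map (AddMonoidHom.mk' (· *ᵥ w) fun X Y => add_mulVec X Y w)
      (continuous_id.matrix_mulVec continuous_const)
  have hform : HasSum (fun k => w ⬝ᵥ (P k *ᵥ w)) (w ⬝ᵥ (S *ᵥ w)) :=
    hmulVec.map (dotProductBilin ℝ ℝ w) (continuous_const.dotProduct continuous_id)
  simp only [mem_ker, mulVecLin_apply, Submodule.mem_iInf]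
  constructor
  · intro hSw k
    rw [hSw, dotProduct_zero,
      hasSum_zero_iff_of_nonneg fun k => (hP k).dotProduct_mulVec_nonneg' w] at hform
    exact ((hP k).mulVec_eq_zero_iff w).2 (congrFun hform k)
  · intro hPw
    exact hmulVec.unique (by simpa only [hPw] using hasSum_zero)

end PosSemidef

section Lyapunov

variable {ι : Type*} [Fintype ι] {A P Q : Matrix ι ι ℝ}

theorem lyapunov_mulVec_eq_zero (hP : P.PosSemidef) (hQ : Q.PosSemidef)
    (hL : A * P + P * Aᵀ + Q = 0) {w : ι → ℝ} (hw : P *ᵥ w = 0) :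
    Q *ᵥ w = 0 ∧ P *ᵥ (Aᵀ *ᵥ w) = 0 := by
  have hLw : P *ᵥ (Aᵀ *ᵥ w) + Q *ᵥ w = 0 := by
    simpa [add_mulVec, ← mulVec_mulVec, hw] using congrArg (· *ᵥ w) hL
  have hQw : Q *ᵥ w = 0 := by
    rw [hQ.mulVec_eq_zero_iff]
    have hPAw : w ⬝ᵥ (P *ᵥ (Aᵀ *ᵥ w)) = 0 := by
      rw [dotProduct_comm, mulVec_dotProduct_eq, (isHermitian_iff_isSymm.1 hP.isHermitian).eq,
        hw, dotProduct_zero]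
    simpa only [dotProduct_add, hPAw, zero_add, dotProduct_zero] using congrArg (w ⬝ᵥ ·) hLw
  exact ⟨hQw, by simpa [hQw] using hLw⟩

theorem lyapunov_mulVec_of_mulVec_eq_zero (hL : A * P + P * Aᵀ + Q = 0) {y : ι → ℝ}
    (hy : Q *ᵥ y = 0) : A *ᵥ (P *ᵥ y) = P *ᵥ (-Aᵀ *ᵥ y) := by
  have hLy := congrArg (· *ᵥ y) hL
  simp only [add_mulVec, ← mulVec_mulVec, hy, add_zero, zero_mulVec] at hLy
  rw [neg_mulVec, mulVec_neg, eq_neg_of_add_eq_zero_left hLy]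

theorem lyapunov_pow_mulVec_dotProduct [DecidableEq ι] (hL : A * P + P * Aᵀ + Q = 0)
    {V : Submodule ℝ (ι → ℝ)} (hV : ∀ y ∈ V, Aᵀ *ᵥ y ∈ V) (hQ : V ≤ ker Q.mulVecLin)
    (k : ℕ) (x : ι → ℝ) {y : ι → ℝ} (hy : y ∈ V) :
    (Aᵀ ^ k *ᵥ x) ⬝ᵥ (P *ᵥ y) = x ⬝ᵥ (P *ᵥ ((-Aᵀ) ^ k *ᵥ y)) := by
  induction k generalizing y with
  | zero => simp
  | succ k ih =>
    rw [pow_succ', ← mulVec_mulVec, mulVec_dotProduct_eq, transpose_transpose,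
      lyapunov_mulVec_of_mulVec_eq_zero hL (hQ hy),
      ih (by rw [neg_mulVec]; exact V.neg_mem (hV y hy)), mulVec_mulVec y, ← pow_succ]

theorem lyapunov_aeval_mulVec_dotProduct [DecidableEq ι] (hL : A * P + P * Aᵀ + Q = 0)
    {V : Submodule ℝ (ι → ℝ)} (hV : ∀ y ∈ V, Aᵀ *ᵥ y ∈ V) (hQ : V ≤ ker Q.mulVecLin)
    (p : ℝ[X]) (x : ι → ℝ) {y : ι → ℝ} (hy : y ∈ V) :
    (aeval Aᵀ p *ᵥ x) ⬝ᵥ (P *ᵥ y) = x ⬝ᵥ (P *ᵥ (aeval (-Aᵀ) p *ᵥ y)) := by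
  induction p using Polynomial.induction_on' with
  | add p q hp hq =>
    simp only [map_add, add_mulVec, mulVec_add, add_dotProduct, dotProduct_add, hp, hq]
  | monomial k c =>
    simp only [aeval_monomial, ← Algebra.smul_def, smul_mulVec, mulVec_smul, smul_dotProduct,
      dotProduct_smul, lyapunov_pow_mulVec_dotProduct hL hV hQ k x hy]

end Lyapunov

namespace IsHurwitz

variable {n : ℕ} {A P Q : Matrix (Fin n) (Fin n) ℝ}

theorem re_neg_of_aeval_charpoly_eq_zero (hA : IsHurwitz A) {μ : ℂ}
    (hμ : aeval μ A.charpoly = 0) : μ.re < 0 :=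
  hA μ (by rwa [mem_spectrum_iff_isRoot_charpoly, charpoly_map, IsRoot, eval_map_algebraMap])

theorem isCoprime_charpoly_comp_neg_X (hA : IsHurwitz A) :
    IsCoprime A.charpoly (A.charpoly.comp (-X)) := by
  refine (isCoprime_iff_aeval_ne_zero_of_isAlgClosed ℝ ℂ _ _).2 fun μ => ?_
  by_contra! h
  have hneg : aeval (-μ) A.charpoly = 0 := by simpa [aeval_comp] using h.2
  have := hA.re_neg_of_aeval_charpoly_eq_zero h.1
  have := hA.re_neg_of_aeval_charpoly_eq_zero hneg
  rw [Complex.neg_re] at this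
  linarith

theorem lyapunov_le_ker (hA : IsHurwitz A) (hP : P.PosSemidef) (hL : A * P + P * Aᵀ + Q = 0)
    {V : Submodule ℝ (Fin n → ℝ)} (hV : ∀ y ∈ V, Aᵀ *ᵥ y ∈ V) (hQ : V ≤ ker Q.mulVecLin) :
    V ≤ ker P.mulVecLin := by
  intro w hw
  have hχ : aeval Aᵀ A.charpoly = 0 := charpoly_transpose A ▸ aeval_self_charpoly Aᵀ
  set χ := A.charpoly
  have hχneg : aeval (-Aᵀ) (χ.comp (-X)) = 0 := by simpa [aeval_comp] using hχ
  obtain ⟨u, v, huv⟩ := hA.isCoprime_charpoly_comp_neg_X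
  have hwPw : w ⬝ᵥ (P *ᵥ w) = 0 := calc
    w ⬝ᵥ (P *ᵥ w) = w ⬝ᵥ (P *ᵥ (aeval (-Aᵀ) (u * χ + v * χ.comp (-X)) *ᵥ w)) := by
      rw [huv, map_one, one_mulVec]
    _ = (aeval Aᵀ (u * χ) *ᵥ w) ⬝ᵥ (P *ᵥ w) +
        w ⬝ᵥ (P *ᵥ (aeval (-Aᵀ) (v * χ.comp (-X)) *ᵥ w)) := by
      rw [map_add, add_mulVec, mulVec_add, dotProduct_add,
        lyapunov_aeval_mulVec_dotProduct hL hV hQ _ _ hw]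
    _ = 0 := by simp [hχ, hχneg]
  simpa [hP.mulVec_eq_zero_iff] using hwPw

end IsHurwitz

section Gramian

variable {κ α : Type*} [Fintype κ] [Fintype α]

theorem reachableSubspace_le_dotOrthogonal_iInf_ker {ι : Type*} [Fintype ι] [DecidableEq ι]
    [DecidableEq κ] {A₀ : Matrix ι ι ℝ} {B : α → Matrix ι κ ℝ} {D : α → Matrix ι ι ℝ} {P : ℕ → Matrix ι ι ℝ}
    (hP : ∀ k, (P k).PosSemidef)
    (hP0 : A₀ * P 0 + P 0 * A₀ᵀ + ∑ j, B j * (B j)ᵀ = 0)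
    (hPsucc : ∀ k, A₀ * P (k + 1) + P (k + 1) * A₀ᵀ + ∑ j, D j * P k * (D j)ᵀ = 0) :
    reachableSubspace (insert A₀ (Set.range D)) B ≤ dotOrthogonal (⨅ k, ker (P k).mulVecLin) := by
  have hL0 : A₀ * P 0 + P 0 * A₀ᵀ + ∑ j, B j * (1 : Matrix κ κ ℝ) * (B j)ᵀ = 0 := by
    simpa using hP0
  have hQ0 := PosSemidef.one.sum_mul_mul_transpose B Finset.univ
  have hQsucc (k : ℕ) := (hP k).sum_mul_mul_transpose D Finset.univ
  refine reachableSubspace_le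
    (fun i => (range_mulVecLin_le_dotOrthogonal_iff _ _).2 fun w hw => ?_)
    fun C hC x hx => mulVec_mem_dotOrthogonal (fun w hw => ?_) hx
  all_goals simp only [Submodule.mem_iInf, mem_ker, mulVecLin_apply] at hw ⊢
  · simpa using PosSemidef.one.mulVec_transpose_eq_zero_of_sum
      (lyapunov_mulVec_eq_zero (hP 0) hQ0 hL0 (hw 0)).1 (Finset.mem_univ i)
  · rcases hC with rfl | ⟨j, rfl⟩
    · rintro (_ | k)
      · exact (lyapunov_mulVec_eq_zero (hP 0) hQ0 hL0 (hw 0)).2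
      · exact (lyapunov_mulVec_eq_zero (hP _) (hQsucc k) (hPsucc k) (hw _)).2
    · exact fun k => (hP k).mulVec_transpose_eq_zero_of_sum
        (lyapunov_mulVec_eq_zero (hP _) (hQsucc k) (hPsucc k) (hw _)).1 (Finset.mem_univ j)

theorem dotOrthogonal_reachableSubspace_le_ker {n : ℕ} {A₀ : Matrix (Fin n) (Fin n) ℝ}
    {B : α → Matrix (Fin n) κ ℝ} {D : α → Matrix (Fin n) (Fin n) ℝ}
    {P : ℕ → Matrix (Fin n) (Fin n) ℝ}
    (hA : IsHurwitz A₀) (hP : ∀ k, (P k).PosSemidef)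
    (hP0 : A₀ * P 0 + P 0 * A₀ᵀ + ∑ j, B j * (B j)ᵀ = 0)
    (hPsucc : ∀ k, A₀ * P (k + 1) + P (k + 1) * A₀ᵀ + ∑ j, D j * P k * (D j)ᵀ = 0) (k : ℕ) :
    dotOrthogonal (reachableSubspace (insert A₀ (Set.range D)) B) ≤ ker (P k).mulVecLin := by
  set V := dotOrthogonal (reachableSubspace (insert A₀ (Set.range D)) B)
  have hV {C} (hC : C ∈ insert A₀ (Set.range D)) {w} (hw : w ∈ V) : Cᵀ *ᵥ w ∈ V :=
    mulVec_mem_dotOrthogonal (fun x hx => by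
      rw [transpose_transpose]; exact mulVec_mem_reachableSubspace hC hx) hw
  have hVA := fun w (hw : w ∈ V) => hV (Set.mem_insert A₀ _) hw
  induction k with
  | zero =>
    refine hA.lyapunov_le_ker (hP 0) hP0 hVA fun w hw => ?_
    have hBw (j : α) : (B j)ᵀ *ᵥ w = 0 := by
      refine (range_mulVecLin_le_dotOrthogonal_iff _ _).1 ?_ hw
      rw [dotOrthogonal_dotOrthogonal]
      exact range_le_reachableSubspace j
    simp only [mem_ker, mulVecLin_apply, sum_mulVec, ← mulVec_mulVec, hBw, mulVec_zero,
      Finset.sum_const_zero]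
  | succ k ih =>
    refine hA.lyapunov_le_ker (hP _) (hPsucc k) hVA fun w hw => ?_
    have hDw (j : α) : P k *ᵥ ((D j)ᵀ *ᵥ w) = 0 :=
      ih (hV (Set.mem_insert_of_mem _ ⟨j, rfl⟩) hw)
    simp only [mem_ker, mulVecLin_apply, sum_mulVec, ← mulVec_mulVec, hDw, mulVec_zero,
      Finset.sum_const_zero]

end Gramian

theorem range_gramian_eq_span_products_of_D_and_A_general
    {n m M : ℕ} (hM : 0 < M)
    (A : Fin M → Matrix (Fin n) (Fin n) ℝ)
    (B : Fin M → Matrix (Fin n) (Fin m) ℝ)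
    (hA : IsHurwitz (A ⟨0, hM⟩))
    (D : Fin M → Matrix (Fin n) (Fin n) ℝ)
    (P : ℕ → Matrix (Fin n) (Fin n) ℝ)
    -- `P 0` plays the role of `P₁`, etc.
    (hP1psd : (P 0).PosSemidef)
    (hP1 : A ⟨0, hM⟩ * P 0 + P 0 * (A ⟨0, hM⟩)ᵀ + ∑ j : Fin M, B j * (B j)ᵀ = 0)
    (hPkpsd : ∀ k : ℕ, (P (k + 1)).PosSemidef)
    (hPk : ∀ k : ℕ,
      A ⟨0, hM⟩ * P (k + 1) + P (k + 1) * (A ⟨0, hM⟩)ᵀ +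
        ∑ j : Fin M, D j * P k * (D j)ᵀ = 0)
    (S : Matrix (Fin n) (Fin n) ℝ) (hS : HasSum P S) :
    LinearMap.range S.mulVecLin =
      ⨆ (L : List (Matrix (Fin n) (Fin n) ℝ))
        (_ : ∀ X ∈ L, X ∈ insert (A ⟨0, hM⟩) (Set.range D)) (i : Fin M),
        LinearMap.range ((L.prod * B i).mulVecLin) := by
  have hP : ∀ k, (P k).PosSemidef := by
    rintro (_ | k)
    exacts [hP1psd, hPkpsd k]
  have hSsymm : S.IsSymm :=
    isSymm_of_hasSum hS fun k => isHermitian_iff_isSymm.1 (hP k).isHermitian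
  change _ = reachableSubspace _ B
  rw [range_mulVecLin_eq_dotOrthogonal_ker hSsymm, ker_mulVecLin_eq_iInf_of_hasSum hS hP]
  refine le_antisymm ?_ (reachableSubspace_le_dotOrthogonal_iInf_ker hP hP1 hPk)
  rw [← dotOrthogonal_le_dotOrthogonal_iff, dotOrthogonal_dotOrthogonal]
  exact le_iInf (dotOrthogonal_reachableSubspace_le_ker hA hP hP1 hPk)

theorem range_gramian_eq_span_products_of_D_and_A
    {n m M : ℕ} (hM : 0 < M)
    (A : Fin M → Matrix (Fin n) (Fin n) ℝ)
    (B : Fin M → Matrix (Fin n) (Fin m) ℝ)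
    (hA : IsHurwitz (A ⟨0, hM⟩))
    (D : Fin M → Matrix (Fin n) (Fin n) ℝ)
    (hD : ∀ j, D j = A j - A ⟨0, hM⟩)
    (P : ℕ → Matrix (Fin n) (Fin n) ℝ)
    -- `P 0` plays the role of `P₁`, etc.
    (hP1psd : (P 0).PosSemidef)
    (hP1 : A ⟨0, hM⟩ * P 0 + P 0 * (A ⟨0, hM⟩)ᵀ + ∑ j : Fin M, B j * (B j)ᵀ = 0)
    (hPkpsd : ∀ k : ℕ, (P (k + 1)).PosSemidef)
    (hPk : ∀ k : ℕ,
      A ⟨0, hM⟩ * P (k + 1) + P (k + 1) * (A ⟨0, hM⟩)ᵀ +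
        ∑ j : Fin M, D j * P k * (D j)ᵀ = 0)
    (S : Matrix (Fin n) (Fin n) ℝ) (hS : HasSum P S) :
    LinearMap.range S.mulVecLin =
      ⨆ (L : List (Matrix (Fin n) (Fin n) ℝ))
        (_ : ∀ X ∈ L, X ∈ insert (A ⟨0, hM⟩) (Set.range D)) (i : Fin M),
        LinearMap.range ((L.prod * B i).mulVecLin) :=
  range_gramian_eq_span_products_of_D_and_A_general hM A B hA D P hP1psd hP1 hPkpsd hPk S hS
end

section
/- Let A, D_1, …, D_M be real n×n matrices with A Hurwitz and let B_1, …, B_M be real n×m matrices. Suppose there exist β > 0 and α > 0 with ‖exp(A·t)‖ ≤ β·exp(−α·t) for all t ≥ 0 and ‖∑_{j=1}^{M} D_j·D_jᵀ‖ < 2α/β². Define P_1 as the unique symmetric positive semidefinite solution of A·P_1 + P_1·Aᵀ + ∑_{j=1}^{M} B_j·B_jᵀ = 0 and, for k ≥ 2, P_k as the unique symmetric positive semidefinite solution of A·P_k + P_k·Aᵀ + ∑_{j=1}^{M} D_j·P_{k−1}·D_jᵀ = 0. Then the series ∑_{k≥1} P_k is summable and its sum P is a symmetric positive semidefinite solution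 of the generalized Lyapunov equation A·P + P·Aᵀ + ∑_{j=1}^{M} (D_j·P·D_jᵀ + B_j·B_jᵀ) = 0. -/
open Matrix
open scoped Matrix.Norms.L2Operator

section Helpers

open Filter intervalIntegral MeasureTheory
open scoped Topology RealInnerProductSpace


lemma lyap_bound {n : ℕ} (A P Q : Matrix (Fin n) (Fin n) ℝ)
    (α β : ℝ) (hβ : 0 < β) (hα : 0 < α)
    (hexp : ∀ t : ℝ, 0 ≤ t → ‖NormedSpace.exp (t • A)‖ ≤ β * Real.exp (-α * t))
    (h : A * P + P * Aᵀ + Q = 0) :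
    ‖P‖ ≤ β ^ 2 / (2 * α) * ‖Q‖ := by
  classical
  set e : ℝ → Matrix (Fin n) (Fin n) ℝ := fun t => NormedSpace.exp (t • A) with he_def
  have he : ∀ t, HasDerivAt e (A * e t) t := fun t => hasDerivAt_exp_smul_const' A t
  have hecont : Continuous e := by
    rw [continuous_iff_continuousAt]; exact fun t => (he t).continuousAt
  let Tr : Matrix (Fin n) (Fin n) ℝ →L[ℝ] Matrix (Fin n) (Fin n) ℝ :=
    LinearMap.toContinuousLinearMap (Matrix.transposeLinearEquiv (Fin n) (Fin n) ℝ ℝ).toLinearMap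
  have hTr : ∀ X : Matrix (Fin n) (Fin n) ℝ, Tr X = Xᵀ := fun X => rfl
  have heT : ∀ t, HasDerivAt (fun t => (e t)ᵀ) ((e t)ᵀ * Aᵀ) t := by
    intro t
    have := Tr.hasFDerivAt.comp_hasDerivAt t (he t)
    simp only [hTr, Matrix.transpose_mul] at this; exact this
  have hAe : ∀ t, A * e t = e t * A := fun t =>
    (hasDerivAt_exp_smul_const' A t).unique (hasDerivAt_exp_smul_const A t)
  have hAeT : ∀ t, (e t)ᵀ * Aᵀ = Aᵀ * (e t)ᵀ := fun t => by
    rw [← transpose_mul, ← transpose_mul, hAe]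
  have hAPQ : A * P + P * Aᵀ = -Q := by
    rw [← sub_eq_zero]; rw [show A * P + P * Aᵀ - -Q = A * P + P * Aᵀ + Q by abel]; exact h
  have hf : ∀ t, HasDerivAt (fun t => e t * P * (e t)ᵀ) (-(e t * Q * (e t)ᵀ)) t := by
    intro t
    have key := ((he t).mul_const P).mul (heT t)
    refine key.congr_deriv ?_
    have h1 : -(e t * Q * (e t)ᵀ) = e t * (A * P + P * Aᵀ) * (e t)ᵀ := by
      rw [hAPQ]; noncomm_ring
    rw [h1, hAe t, hAeT t]; noncomm_ring
  have hnormT : ∀ X : Matrix (Fin n) (Fin n) ℝ, ‖Xᵀ‖ = ‖X‖ := fun X => by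
    rw [← conjTranspose_eq_transpose_of_trivial]; exact l2_opNorm_conjTranspose X
  have hg_cont : Continuous fun t => e t * Q * (e t)ᵀ :=
    (hecont.mul continuous_const).mul (continuous_id.comp hecont).matrix_transpose
  have h2α : (0:ℝ) < 2 * α := by positivity
  have hF : ∀ t : ℝ, HasDerivAt (fun t => Real.exp (-(2*α)*t) / (-(2*α)))
      (Real.exp (-(2*α)*t)) t := by
    intro t
    have h1 : HasDerivAt (fun t : ℝ => -(2*α)*t) (-(2*α)) t := by
      simpa using (hasDerivAt_id t).const_mul (-(2*α))
    have h3 := h1.exp.div_const (-(2*α))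
    have h4 : Real.exp (-(2*α)*t) * -(2*α) / -(2*α) = Real.exp (-(2*α)*t) := by
      field_simp
    rwa [h4] at h3
  have hbcont : Continuous fun t : ℝ => β ^ 2 * ‖Q‖ * Real.exp (-(2*α)*t) :=
    continuous_const.mul (Real.continuous_exp.comp (continuous_const.mul continuous_id))
  have hQ0 : (0:ℝ) ≤ ‖Q‖ := norm_nonneg _
  have key : ∀ T : ℝ, 0 ≤ T →
      ‖P‖ ≤ β ^ 2 * Real.exp (-α * T) ^ 2 * ‖P‖ + β ^ 2 / (2 * α) * ‖Q‖ := by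
    intro T hT
    have hint : ∫ t in (0:ℝ)..T, -(e t * Q * (e t)ᵀ) =
        e T * P * (e T)ᵀ - e 0 * P * (e 0)ᵀ :=
      integral_eq_sub_of_hasDerivAt (fun t _ => hf t) (hg_cont.neg.intervalIntegrable 0 T)
    have he0 : e 0 * P * (e 0)ᵀ = P := by
      simp [he_def, NormedSpace.exp_zero]
    rw [he0, intervalIntegral.integral_neg] at hint
    have hP_eq : P = e T * P * (e T)ᵀ + ∫ t in (0:ℝ)..T, e t * Q * (e t)ᵀ := by
      have h3 : e T * P * (e T)ᵀ - P + (∫ t in (0:ℝ)..T, e t * Q * (e t)ᵀ) = 0 := by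
        rw [← hint]; abel
      calc P = e T * P * (e T)ᵀ + (∫ t in (0:ℝ)..T, e t * Q * (e t)ᵀ)
              - (e T * P * (e T)ᵀ - P + (∫ t in (0:ℝ)..T, e t * Q * (e t)ᵀ)) := by abel
        _ = _ := by rw [h3]; abel
    have hbound : ‖∫ t in (0:ℝ)..T, e t * Q * (e t)ᵀ‖ ≤
        |∫ t in (0:ℝ)..T, β ^ 2 * ‖Q‖ * Real.exp (-(2*α)*t)| := by
      refine (intervalIntegral.norm_integral_le_of_norm_le hT ?_
        (hbcont.intervalIntegrable 0 T)).trans (le_abs_self _)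
      filter_upwards with t ht
      have ht0 : (0:ℝ) ≤ t := le_of_lt ht.1
      calc ‖e t * Q * (e t)ᵀ‖ ≤ ‖e t * Q‖ * ‖(e t)ᵀ‖ := l2_opNorm_mul _ _
        _ ≤ ‖e t‖ * ‖Q‖ * ‖(e t)ᵀ‖ :=
            mul_le_mul_of_nonneg_right (l2_opNorm_mul _ _) (norm_nonneg _)
        _ = ‖e t‖ * ‖Q‖ * ‖e t‖ := by rw [hnormT]
        _ ≤ (β * Real.exp (-α * t)) * ‖Q‖ * (β * Real.exp (-α * t)) := by
            have h1 := hexp t ht0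
            have h2 : (0:ℝ) ≤ β * Real.exp (-α*t) := by positivity
            apply mul_le_mul (mul_le_mul_of_nonneg_right h1 hQ0) h1 (norm_nonneg _)
            positivity
        _ = β ^ 2 * ‖Q‖ * Real.exp (-(2*α)*t) := by
            rw [show (-(2*α))*t = (-α*t) + (-α*t) by ring, Real.exp_add]; ring
    have hIval : ∫ t in (0:ℝ)..T, Real.exp (-(2*α)*t)
        = (1 - Real.exp (-(2*α)*T)) / (2*α) := by
      have h5 : ∫ t in (0:ℝ)..T, Real.exp (-(2*α)*t) =
          Real.exp (-(2*α)*T) / (-(2*α)) - Real.exp (-(2*α)*0) / (-(2*α)) :=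
        integral_eq_sub_of_hasDerivAt (fun t _ => hF t)
          ((Real.continuous_exp.comp (continuous_const.mul continuous_id)).intervalIntegrable 0 T)
      rw [h5, mul_zero, Real.exp_zero]
      field_simp
      ring
    have hintval : |∫ t in (0:ℝ)..T, β ^ 2 * ‖Q‖ * Real.exp (-(2*α)*t)| ≤
        β ^ 2 / (2 * α) * ‖Q‖ := by
      rw [intervalIntegral.integral_const_mul, hIval]
      have hE0 : 0 < Real.exp (-(2*α)*T) := Real.exp_pos _
      have hE1 : Real.exp (-(2*α)*T) ≤ 1 := Real.exp_le_one_iff.mpr (by nlinarith)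
      rw [abs_of_nonneg (mul_nonneg (mul_nonneg (by positivity) hQ0)
        (div_nonneg (by linarith) h2α.le))]
      have step : (1 - Real.exp (-(2*α)*T)) / (2*α) ≤ 1 / (2*α) := by
        gcongr
        · linarith
      calc β ^ 2 * ‖Q‖ * ((1 - Real.exp (-(2*α)*T)) / (2*α))
          ≤ β ^ 2 * ‖Q‖ * (1 / (2*α)) :=
            mul_le_mul_of_nonneg_left step (by positivity)
        _ = β ^ 2 / (2 * α) * ‖Q‖ := by ring
    have hFb : ‖e T * P * (e T)ᵀ‖ ≤ β ^ 2 * Real.exp (-α * T) ^ 2 * ‖P‖ := by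
      have h1 := hexp T hT
      have := (l2_opNorm_mul (e T * P) ((e T)ᵀ)).trans
        (mul_le_mul_of_nonneg_right (l2_opNorm_mul (e T) P) (norm_nonneg _))
      rw [hnormT] at this
      refine this.trans ?_
      have hP0 : (0:ℝ) ≤ ‖P‖ := norm_nonneg _
      have he0' : (0:ℝ) ≤ ‖e T‖ := norm_nonneg _
      have h1' : ‖e T‖ ≤ β * Real.exp (-α * T) := h1
      have hsq : ‖e T‖ * ‖e T‖ ≤ (β * Real.exp (-α * T)) * (β * Real.exp (-α * T)) :=
        mul_le_mul h1' h1' he0' (by positivity)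
      nlinarith [Real.exp_pos (-α*T)]
    calc ‖P‖ = ‖e T * P * (e T)ᵀ + ∫ t in (0:ℝ)..T, e t * Q * (e t)ᵀ‖ := by rw [← hP_eq]
      _ ≤ ‖e T * P * (e T)ᵀ‖ + ‖∫ t in (0:ℝ)..T, e t * Q * (e t)ᵀ‖ := norm_add_le _ _
      _ ≤ β ^ 2 * Real.exp (-α * T) ^ 2 * ‖P‖ + β ^ 2 / (2 * α) * ‖Q‖ :=
          add_le_add hFb (hbound.trans hintval)
  have hlim : Tendsto (fun T => β ^ 2 * Real.exp (-α * T) ^ 2 * ‖P‖ + β ^ 2 / (2 * α) * ‖Q‖)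
      atTop (𝓝 (β ^ 2 * 0 ^ 2 * ‖P‖ + β ^ 2 / (2 * α) * ‖Q‖)) := by
    apply Tendsto.add _ tendsto_const_nhds
    apply Tendsto.mul_const
    apply Tendsto.const_mul
    apply Tendsto.pow
    have h6 : Tendsto (fun T : ℝ => -α * T) atTop atBot :=
      Tendsto.const_mul_atTop_of_neg (neg_neg_iff_pos.mpr hα) tendsto_id
    exact Real.tendsto_exp_atBot.comp h6
  have := ge_of_tendsto hlim (eventually_atTop.mpr ⟨0, fun T hT => key T hT⟩)
  simpa using this
noncomputable abbrev eu {n : ℕ} (v : Fin n → ℝ) : EuclideanSpace ℝ (Fin n) :=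
  (WithLp.equiv 2 (Fin n → ℝ)).symm v

lemma sum_mulVec' {n M : ℕ} (f : Fin M → Matrix (Fin n) (Fin n) ℝ) (v : Fin n → ℝ) :
    (∑ j, f j) *ᵥ v = ∑ j, f j *ᵥ v :=
  map_sum (Matrix.mulVec.addMonoidHomLeft v) f Finset.univ

lemma dotProduct_sum' {n M : ℕ} (v : Fin n → ℝ) (f : Fin M → Fin n → ℝ) :
    v ⬝ᵥ ∑ j, f j = ∑ j, v ⬝ᵥ f j := by
  simp only [dotProduct, Finset.sum_apply, Finset.mul_sum]
  rw [Finset.sum_comm]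

lemma dot_eq_inner {n : ℕ} (v w : Fin n → ℝ) : v ⬝ᵥ w = ⟪eu v, eu w⟫ := by
  rw [show eu v = WithLp.toLp 2 v from rfl, show eu w = WithLp.toLp 2 w from rfl,
    EuclideanSpace.inner_toLp_toLp]; simp [dotProduct_comm]

lemma norm_sq_eu {n : ℕ} (v : Fin n → ℝ) : v ⬝ᵥ v = ‖eu v‖ ^ 2 := by
  rw [dot_eq_inner, real_inner_self_eq_norm_sq]

lemma quad_le_norm {n : ℕ} (X : Matrix (Fin n) (Fin n) ℝ) (v : Fin n → ℝ) :
    v ⬝ᵥ X *ᵥ v ≤ ‖X‖ * ‖eu v‖ ^ 2 := by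
  have h1 : v ⬝ᵥ X *ᵥ v = ⟪eu v, eu (X *ᵥ v)⟫ := dot_eq_inner _ _
  rw [h1]
  calc ⟪eu v, eu (X *ᵥ v)⟫ ≤ ‖eu v‖ * ‖eu (X *ᵥ v)‖ := real_inner_le_norm _ _
    _ ≤ ‖eu v‖ * (‖X‖ * ‖eu v‖) := by
        apply mul_le_mul_of_nonneg_left (l2_opNorm_mulVec X (eu v)) (norm_nonneg _)
    _ = ‖X‖ * ‖eu v‖ ^ 2 := by ring

lemma psd_norm_le {n : ℕ} {S : Matrix (Fin n) (Fin n) ℝ} (hS : S.PosSemidef)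
    {c : ℝ} (hc : 0 ≤ c) (h : ∀ v : Fin n → ℝ, v ⬝ᵥ S *ᵥ v ≤ c * ‖eu v‖ ^ 2) :
    ‖S‖ ≤ c := by
  classical
  obtain ⟨C, hCC⟩ : ∃ C : Matrix (Fin n) (Fin n) ℝ, Cᴴ * C = S := by
    open scoped MatrixOrder in
    obtain ⟨C, hC⟩ := CStarAlgebra.nonneg_iff_eq_star_mul_self.mp hS.nonneg
    exact ⟨C, hC.symm⟩
  have hquad : ∀ v : Fin n → ℝ, v ⬝ᵥ S *ᵥ v = ‖eu (C *ᵥ v)‖ ^ 2 := by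
    intro v
    rw [← hCC, ← mulVec_mulVec, dotProduct_mulVec v Cᴴ, conjTranspose_eq_transpose_of_trivial,
      vecMul_transpose, norm_sq_eu]
  have hCle : ‖C‖ ≤ Real.sqrt c := by
    rw [l2_opNorm_def]
    apply ContinuousLinearMap.opNorm_le_bound _ (Real.sqrt_nonneg c)
    intro x
    show ‖eu (C *ᵥ (WithLp.equiv 2 (Fin n → ℝ) x))‖ ≤ _
    have h2 := hquad (WithLp.equiv 2 (Fin n → ℝ) x)
    have h3 := h (WithLp.equiv 2 (Fin n → ℝ) x)
    have hxx : eu (WithLp.equiv 2 (Fin n → ℝ) x) = x := rfl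
    rw [hxx] at h3
    have h4 : ‖eu (C *ᵥ (WithLp.equiv 2 (Fin n → ℝ) x))‖ ^ 2 ≤ (Real.sqrt c * ‖x‖) ^ 2 := by
      rw [← h2]
      calc _ ≤ c * ‖x‖ ^ 2 := h3
        _ = (Real.sqrt c * ‖x‖) ^ 2 := by
            rw [mul_pow, Real.sq_sqrt hc]
    have := Real.sqrt_le_sqrt h4
    rwa [Real.sqrt_sq (norm_nonneg _), Real.sqrt_sq (by positivity)] at this
  calc ‖S‖ = ‖Cᴴ * C‖ := by rw [hCC]
    _ = ‖C‖ * ‖C‖ := l2_opNorm_conjTranspose_mul_self C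
    _ ≤ Real.sqrt c * Real.sqrt c := mul_le_mul hCle hCle (norm_nonneg _) (Real.sqrt_nonneg _)
    _ = c := Real.mul_self_sqrt hc

lemma sum_psd {n M : ℕ} (D : Fin M → Matrix (Fin n) (Fin n) ℝ)
    {X : Matrix (Fin n) (Fin n) ℝ} (hX : X.PosSemidef) :
    (∑ j : Fin M, D j * X * (D j)ᵀ).PosSemidef := by
  have : ∀ j : Fin M, (D j * X * (D j)ᵀ).PosSemidef := by
    intro j
    rw [← conjTranspose_eq_transpose_of_trivial]
    exact hX.mul_mul_conjTranspose_same (D j)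
  classical
  induction (Finset.univ : Finset (Fin M)) using Finset.induction with
  | empty => simpa using Matrix.PosSemidef.zero
  | insert _ _ h ih => rw [Finset.sum_insert h]; exact (this _).add ih

lemma sum_quad_bound {n M : ℕ} (D : Fin M → Matrix (Fin n) (Fin n) ℝ)
    {X : Matrix (Fin n) (Fin n) ℝ} (hX : X.PosSemidef) :
    ‖∑ j : Fin M, D j * X * (D j)ᵀ‖ ≤ ‖∑ j : Fin M, D j * (D j)ᵀ‖ * ‖X‖ := by
  have hXn : (0:ℝ) ≤ ‖X‖ := norm_nonneg _
  apply psd_norm_le (sum_psd D hX) (by positivity)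
  intro v
  have hterm : ∀ j : Fin M, v ⬝ᵥ (D j * X * (D j)ᵀ) *ᵥ v
      = ((D j)ᵀ *ᵥ v) ⬝ᵥ X *ᵥ ((D j)ᵀ *ᵥ v) := by
    intro j
    rw [← mulVec_mulVec, ← mulVec_mulVec, dotProduct_mulVec v (D j), ← mulVec_transpose]
  have hterm2 : ∀ j : Fin M, v ⬝ᵥ (D j * (D j)ᵀ) *ᵥ v
      = ((D j)ᵀ *ᵥ v) ⬝ᵥ ((D j)ᵀ *ᵥ v) := by
    intro j
    rw [← mulVec_mulVec, dotProduct_mulVec v (D j), ← mulVec_transpose]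
  calc v ⬝ᵥ (∑ j : Fin M, D j * X * (D j)ᵀ) *ᵥ v
      = ∑ j : Fin M, v ⬝ᵥ (D j * X * (D j)ᵀ) *ᵥ v := by
        rw [sum_mulVec', dotProduct_sum']
    _ ≤ ∑ j : Fin M, ‖X‖ * ‖eu ((D j)ᵀ *ᵥ v)‖ ^ 2 := by
        apply Finset.sum_le_sum
        intro j _
        rw [hterm j]
        exact quad_le_norm X _
    _ = ‖X‖ * (v ⬝ᵥ (∑ j : Fin M, D j * (D j)ᵀ) *ᵥ v) := by
        rw [sum_mulVec', dotProduct_sum', Finset.mul_sum]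
        congr 1
        ext j
        rw [hterm2 j, norm_sq_eu]
    _ ≤ ‖X‖ * (‖∑ j : Fin M, D j * (D j)ᵀ‖ * ‖eu v‖ ^ 2) := by
        apply mul_le_mul_of_nonneg_left (quad_le_norm _ v) hXn
    _ = ‖∑ j : Fin M, D j * (D j)ᵀ‖ * ‖X‖ * ‖eu v‖ ^ 2 := by ring

end Helpers

theorem summable_psd_iterates_and_sum_solves_generalized_lyapunov
    {n m M : ℕ}
    (A : Matrix (Fin n) (Fin n) ℝ)
    (D : Fin M → Matrix (Fin n) (Fin n) ℝ)
    (B : Fin M → Matrix (Fin n) (Fin m) ℝ)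
    (hA : IsHurwitz A)
    (α β : ℝ) (hβ : 0 < β) (hα : 0 < α)
    (hexp : ∀ t : ℝ, 0 ≤ t →
      ‖NormedSpace.exp (t • A)‖ ≤ β * Real.exp (-α * t))
    (hD : ‖∑ j : Fin M, D j * (D j)ᵀ‖ < 2 * α / β ^ 2)
    (P : ℕ → Matrix (Fin n) (Fin n) ℝ)
    -- `P 0` plays the role of `P₁`, etc.
    (hP1psd : (P 0).PosSemidef)
    (hP1 : A * P 0 + P 0 * Aᵀ + ∑ j : Fin M, B j * (B j)ᵀ = 0)
    (hPkpsd : ∀ k : ℕ, (P (k + 1)).PosSemidef)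
    (hPk : ∀ k : ℕ,
      A * P (k + 1) + P (k + 1) * Aᵀ + ∑ j : Fin M, D j * P k * (D j)ᵀ = 0) :
    Summable P ∧ (∑' k, P k).PosSemidef ∧
      A * (∑' k, P k) + (∑' k, P k) * Aᵀ +
        ∑ j : Fin M, (D j * (∑' k, P k) * (D j)ᵀ + B j * (B j)ᵀ) = 0 := by
  classical
  set K : ℝ := ‖∑ j : Fin M, D j * (D j)ᵀ‖ with hK_def
  set c : ℝ := β ^ 2 / (2 * α) with hc_def
  have hc : 0 < c := by positivity
  have hK0 : 0 ≤ K := norm_nonneg _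
  set r : ℝ := c * K with hr_def
  have hr0 : 0 ≤ r := mul_nonneg hc.le hK0
  have hr1 : r < 1 := by
    have h1 : c * K < c * (2 * α / β ^ 2) := mul_lt_mul_of_pos_left hD hc
    have h2 : c * (2 * α / β ^ 2) = 1 := by
      rw [hc_def]; field_simp
    rw [hr_def]; rw [h2] at h1; exact h1
  have hPpsd : ∀ k, (P k).PosSemidef := by
    rintro (_ | k)
    · exact hP1psd
    · exact hPkpsd k
  -- geometric decay
  have hrec : ∀ k : ℕ, ‖P (k + 1)‖ ≤ r * ‖P k‖ := by
    intro k
    have h1 := lyap_bound A (P (k + 1)) (∑ j : Fin M, D j * P k * (D j)ᵀ)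
      α β hβ hα hexp (hPk k)
    refine h1.trans ?_
    rw [hr_def, hc_def, mul_assoc]
    apply mul_le_mul_of_nonneg_left _ (by positivity)
    exact sum_quad_bound D (hPpsd k)
  have hgeo : ∀ k : ℕ, ‖P k‖ ≤ ‖P 0‖ * r ^ k := by
    intro k
    induction k with
    | zero => simp
    | succ k ih =>
      calc ‖P (k + 1)‖ ≤ r * ‖P k‖ := hrec k
        _ ≤ r * (‖P 0‖ * r ^ k) := mul_le_mul_of_nonneg_left ih hr0
        _ = ‖P 0‖ * r ^ (k + 1) := by ring
  have hsum : Summable P :=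
    Summable.of_norm_bounded ((summable_geometric_of_lt_one hr0 hr1).mul_left ‖P 0‖) hgeo
  set S : Matrix (Fin n) (Fin n) ℝ := ∑' k, P k with hS_def
  -- transpose CLM
  let Tr : Matrix (Fin n) (Fin n) ℝ →L[ℝ] Matrix (Fin n) (Fin n) ℝ :=
    LinearMap.toContinuousLinearMap (Matrix.transposeLinearEquiv (Fin n) (Fin n) ℝ ℝ).toLinearMap
  have hTr : ∀ X : Matrix (Fin n) (Fin n) ℝ, Tr X = Xᵀ := fun X => rfl
  have hS_herm : S.IsHermitian := by
    have h1 : Sᵀ = ∑' k, (P k)ᵀ := by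
      rw [hS_def, ← hTr, ContinuousLinearMap.map_tsum Tr hsum]
      exact tsum_congr fun k => hTr _
    have h2 : ∀ k, (P k)ᵀ = P k := fun k => by
      have := (hPpsd k).isHermitian
      rwa [IsHermitian, conjTranspose_eq_transpose_of_trivial] at this
    rw [IsHermitian, conjTranspose_eq_transpose_of_trivial, h1]
    simp only [h2, hS_def]
  -- quadratic form CLM
  have hS_quad : ∀ v : Fin n → ℝ, 0 ≤ star v ⬝ᵥ S *ᵥ v := by
    intro v
    let φlin : Matrix (Fin n) (Fin n) ℝ →ₗ[ℝ] ℝ :=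
      { toFun := fun X => v ⬝ᵥ X *ᵥ v
        map_add' := fun X Y => by
          show v ⬝ᵥ (X + Y) *ᵥ v = v ⬝ᵥ X *ᵥ v + v ⬝ᵥ Y *ᵥ v
          rw [add_mulVec, dotProduct_add]
        map_smul' := fun a X => by
          show v ⬝ᵥ (a • X) *ᵥ v = _
          rw [smul_mulVec, dotProduct_smul, RingHom.id_apply, smul_eq_mul] }
    let φ : Matrix (Fin n) (Fin n) ℝ →L[ℝ] ℝ := LinearMap.toContinuousLinearMap φlin
    have hφ : ∀ X, φ X = v ⬝ᵥ X *ᵥ v := fun X => rfl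
    have h1 : v ⬝ᵥ S *ᵥ v = ∑' k, v ⬝ᵥ P k *ᵥ v := by
      rw [hS_def, ← hφ, ContinuousLinearMap.map_tsum φ hsum]
      exact tsum_congr fun k => hφ _
    have h2 : 0 ≤ v ⬝ᵥ S *ᵥ v := by
      rw [h1]
      apply tsum_nonneg
      intro k
      have := (hPpsd k).dotProduct_mulVec_nonneg v
      simpa using this
    simpa using h2
  have hSpsd : S.PosSemidef := posSemidef_iff_dotProduct_mulVec.mpr ⟨hS_herm, hS_quad⟩
  -- the equation
  let Tlin : Matrix (Fin n) (Fin n) ℝ →ₗ[ℝ] Matrix (Fin n) (Fin n) ℝ :=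
    LinearMap.mulLeft ℝ A + LinearMap.mulRight ℝ Aᵀ
  let T : Matrix (Fin n) (Fin n) ℝ →L[ℝ] Matrix (Fin n) (Fin n) ℝ :=
    LinearMap.toContinuousLinearMap Tlin
  have hT : ∀ X, T X = A * X + X * Aᵀ := fun X => rfl
  let Glin : Matrix (Fin n) (Fin n) ℝ →ₗ[ℝ] Matrix (Fin n) (Fin n) ℝ :=
    ∑ j : Fin M, (LinearMap.mulLeft ℝ (D j)).comp (LinearMap.mulRight ℝ (D j)ᵀ)
  let G : Matrix (Fin n) (Fin n) ℝ →L[ℝ] Matrix (Fin n) (Fin n) ℝ :=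
    LinearMap.toContinuousLinearMap Glin
  have hG : ∀ X, G X = ∑ j : Fin M, D j * X * (D j)ᵀ := by
    intro X
    show Glin X = _
    simp only [Glin, LinearMap.sum_apply, LinearMap.comp_apply, LinearMap.mulLeft_apply,
      LinearMap.mulRight_apply, mul_assoc]
  have hTP0 : T (P 0) = -(∑ j : Fin M, B j * (B j)ᵀ) := by
    rw [hT]; exact eq_neg_of_add_eq_zero_left hP1
  have hTPk : ∀ k, T (P (k + 1)) = -(G (P k)) := by
    intro k
    rw [hT, hG]; exact eq_neg_of_add_eq_zero_left (hPk k)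
  have hfinal : T S = -(∑ j : Fin M, B j * (B j)ᵀ) + -(G S) := by
    rw [hS_def, ContinuousLinearMap.map_tsum T hsum,
      Summable.tsum_eq_zero_add (f := fun k => T (P k)) (hsum.map T T.continuous), hTP0]
    congr 1
    calc ∑' k, T (P (k + 1)) = ∑' k, -(G (P k)) := tsum_congr fun k => hTPk k
      _ = -(∑' k, G (P k)) := tsum_neg
      _ = -(G S) := by rw [hS_def, ContinuousLinearMap.map_tsum G hsum]
  refine ⟨hsum, hSpsd, ?_⟩
  rw [Finset.sum_add_distrib, ← hT S, ← hG S]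
  rw [hfinal]
  abel
end

section
/- Let A_1, …, A_M be real n×n matrices with A := A_1 Hurwitz, D_j := A_j − A_1, and B_1, …, B_M real n×m matrices. Define P_1 as the unique symmetric positive semidefinite solution of A·P_1 + P_1·Aᵀ + ∑_{j=1}^{M} B_j·B_jᵀ = 0 and, for k ≥ 2, P_k as the unique symmetric positive semidefinite solution of A·P_k + P_k·Aᵀ + ∑_{j=1}^{M} D_j·P_{k−1}·D_jᵀ = 0, and suppose the series ∑_{k≥1} P_k is summable with sum P. Then the range of P is all of ℝⁿ if and only if the reachability subspace R equals ℝⁿ. -/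
open Matrix Polynomial

namespace Aux

lemma charpoly_eval_eq_det {k : ℕ} (T : Matrix (Fin k) (Fin k) ℂ) (μ : ℂ) :
    T.charpoly.eval μ = ((algebraMap ℂ _ μ) - T).det := by
  rw [Matrix.charpoly, ← Polynomial.coe_evalRingHom, RingHom.map_det]
  congr 1
  ext i j
  by_cases h : i = j
  · subst h; simp [charmatrix_apply_eq, Matrix.algebraMap_matrix_apply]
  · simp [charmatrix_apply_ne _ _ _ h, Matrix.algebraMap_matrix_apply, h]

lemma mem_spectrum_iff_det {k : ℕ} (T : Matrix (Fin k) (Fin k) ℂ) (μ : ℂ) :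
    μ ∈ spectrum ℂ T ↔ ((algebraMap ℂ _ μ) - T).det = 0 := by
  rw [spectrum.mem_iff, Matrix.isUnit_iff_isUnit_det]
  simp [isUnit_iff_ne_zero]

lemma mem_spectrum_iff_charpoly {k : ℕ} (T : Matrix (Fin k) (Fin k) ℂ) (μ : ℂ) :
    μ ∈ spectrum ℂ T ↔ T.charpoly.eval μ = 0 := by
  rw [mem_spectrum_iff_det, charpoly_eval_eq_det]

lemma exists_eigenvec {k : ℕ} {T : Matrix (Fin k) (Fin k) ℂ} {μ : ℂ}
    (h : μ ∈ spectrum ℂ T) : ∃ v ≠ 0, T *ᵥ v = μ • v := by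
  rw [mem_spectrum_iff_det] at h
  obtain ⟨v, hv, hv2⟩ := (Matrix.exists_mulVec_eq_zero_iff.2 h)
  refine ⟨v, hv, ?_⟩
  rw [Matrix.sub_mulVec] at hv2
  have h2 : (algebraMap ℂ (Matrix (Fin k) (Fin k) ℂ)) μ *ᵥ v = μ • v := by
    rw [Algebra.algebraMap_eq_smul_one, Matrix.smul_mulVec, Matrix.one_mulVec]
  rw [h2] at hv2
  exact (sub_eq_zero.mp hv2).symm

lemma aeval_mulVec_eigen {k : ℕ} {T : Matrix (Fin k) (Fin k) ℂ} {μ : ℂ} {v : Fin k → ℂ}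
    (h : T *ᵥ v = μ • v) (p : ℂ[X]) : (aeval T p) *ᵥ v = (p.eval μ) • v := by
  induction p using Polynomial.induction_on' with
  | add p q hp hq => rw [map_add, Matrix.add_mulVec, hp, hq, eval_add, add_smul]
  | monomial i a =>
      have hpow : ∀ s : ℕ, T ^ s *ᵥ v = (μ ^ s) • v := by
        intro s
        induction s with
        | zero => simp
        | succ s ih =>
            rw [pow_succ, ← Matrix.mulVec_mulVec, h, Matrix.mulVec_smul, ih, smul_smul,
              ← pow_succ']
      rw [aeval_monomial, eval_monomial, Algebra.algebraMap_eq_smul_one, smul_mul_assoc,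
        one_mul, Matrix.smul_mulVec, hpow, smul_smul]

lemma intertwine_aeval {d e : ℕ} {K : Matrix (Fin d) (Fin d) ℝ} {T : Matrix (Fin e) (Fin e) ℝ}
    {E : Matrix (Fin d) (Fin e) ℝ} (h : K * E = E * T) (p : ℝ[X]) :
    (aeval K p) * E = E * (aeval T p) := by
  induction p using Polynomial.induction_on' with
  | add p q hp hq => rw [map_add, map_add, Matrix.add_mul, Matrix.mul_add, hp, hq]
  | monomial i a =>
      have hpow : ∀ s : ℕ, K ^ s * E = E * T ^ s := by
        intro s
        induction s with
        | zero => simp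
        | succ s ih => rw [pow_succ, pow_succ, Matrix.mul_assoc (K ^ s) K E, h,
            ← Matrix.mul_assoc, ih, Matrix.mul_assoc]
      rw [aeval_monomial, aeval_monomial, Algebra.algebraMap_eq_smul_one,
        Algebra.algebraMap_eq_smul_one, smul_mul_assoc, smul_mul_assoc, one_mul, one_mul,
        Matrix.smul_mul, hpow, Matrix.mul_smul]

noncomputable def toC {d : ℕ} : Matrix (Fin d) (Fin d) ℝ →ₐ[ℝ] Matrix (Fin d) (Fin d) ℂ :=
  AlgHom.mapMatrix (Algebra.ofId ℝ ℂ)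

lemma toC_apply {d : ℕ} (M : Matrix (Fin d) (Fin d) ℝ) :
    toC M = M.map (algebraMap ℝ ℂ) := rfl

lemma sylv {d : ℕ} (T Ms : Matrix (Fin d) (Fin d) ℝ) (q : ℝ[X])
    (hq : aeval T q = 0) (hdeg : 0 < q.degree)
    (hroots : ∀ μ : ℂ, (q.map (algebraMap ℝ ℂ)).eval μ = 0 → μ.re < 0)
    (hM : Tᵀ * Ms + Ms * T = 0) : Ms = 0 := by
  have hint : (-Tᵀ) * Ms = Ms * T := by
    have h2 := add_eq_zero_iff_eq_neg.mp hM
    rw [Matrix.neg_mul, h2, neg_neg]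
  have hGM : (aeval (-Tᵀ) q) * Ms = 0 := by
    rw [intertwine_aeval hint q, hq, Matrix.mul_zero]
  set qC : ℂ[X] := q.map (algebraMap ℝ ℂ) with hqC
  have hdegC : 0 < qC.degree := by
    rwa [hqC, degree_map_eq_of_injective (algebraMap ℝ ℂ).injective]
  have haevalC : ∀ (W : Matrix (Fin d) (Fin d) ℝ),
      toC (aeval W q) = aeval (toC W) qC := by
    intro W
    rw [hqC, aeval_map_algebraMap, ← Polynomial.aeval_algHom_apply]
  have hdet : ((aeval (-Tᵀ) q)).det ≠ 0 := by
    intro h0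
    have hdetC : (aeval (toC (-Tᵀ)) qC).det = 0 := by
      rw [← haevalC, toC_apply]
      rw [show ((aeval (-Tᵀ) q).map (algebraMap ℝ ℂ)) =
        (algebraMap ℝ ℂ).mapMatrix (aeval (-Tᵀ) q) from rfl, ← RingHom.map_det, h0, map_zero]
    -- 0 ∈ spectrum of aeval (toC (-Tᵀ)) qC
    have h0spec : (0 : ℂ) ∈ spectrum ℂ (aeval (toC (-Tᵀ)) qC) := by
      rw [mem_spectrum_iff_det, map_zero, zero_sub, Matrix.det_neg, hdetC, mul_zero]
    rw [spectrum.map_polynomial_aeval_of_degree_pos _ _ hdegC] at h0spec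
    obtain ⟨ν, hν, hνeval⟩ := h0spec
    have hν1 : ν.re < 0 := hroots ν hνeval
    -- ν ∈ spectrum (toC (-Tᵀ)) = -(toC T)ᵀ
    have hTC : toC (-Tᵀ) = -((toC T)ᵀ) := by
      rw [map_neg, toC_apply, toC_apply, ← Matrix.transpose_map]
    rw [hTC, mem_spectrum_iff_det] at hν
    have hν2 : (-ν) ∈ spectrum ℂ (toC T) := by
      rw [mem_spectrum_iff_det]
      have haT : ((algebraMap ℂ (Matrix (Fin d) (Fin d) ℂ)) ν)ᵀ =
          (algebraMap ℂ (Matrix (Fin d) (Fin d) ℂ)) ν := by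
        rw [Algebra.algebraMap_eq_smul_one, Matrix.transpose_smul, Matrix.transpose_one]
      have : (algebraMap ℂ (Matrix (Fin d) (Fin d) ℂ)) (-ν) - toC T =
          (-((algebraMap ℂ (Matrix (Fin d) (Fin d) ℂ)) ν - -((toC T)ᵀ)))ᵀ := by
        rw [map_neg]
        simp only [Matrix.transpose_neg, Matrix.transpose_sub, Matrix.transpose_transpose, haT]
        abel
      rw [this, Matrix.det_transpose, Matrix.det_neg, hν, mul_zero]
    obtain ⟨v, hv0, hveig⟩ := exists_eigenvec hν2
    have hqT : aeval (toC T) qC = 0 := by rw [← haevalC, hq, map_zero]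
    have := aeval_mulVec_eigen hveig qC
    rw [hqT, Matrix.zero_mulVec] at this
    have heval0 : qC.eval (-ν) = 0 := by
      by_contra hne
      exact hv0 (by
        have := congrArg (fun w => (qC.eval (-ν))⁻¹ • w) this.symm
        simpa [smul_smul, inv_mul_cancel₀ hne] using this)
    have := hroots _ heval0
    rw [Complex.neg_re] at this
    linarith
  -- Ms = 0
  have hunit : IsUnit (aeval (-Tᵀ) q) := by
    rw [Matrix.isUnit_iff_isUnit_det]
    exact isUnit_iff_ne_zero.mpr hdet
  obtain ⟨u, hu⟩ := hunit
  calc Ms = (↑u⁻¹ * (aeval (-Tᵀ) q)) * Ms := by rw [← hu, Units.inv_mul, Matrix.one_mul]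
    _ = ↑u⁻¹ * ((aeval (-Tᵀ) q) * Ms) := by rw [Matrix.mul_assoc]
    _ = 0 := by rw [hGM, Matrix.mul_zero]

lemma aeval_transpose {n : ℕ} (A : Matrix (Fin n) (Fin n) ℝ) (p : ℝ[X]) :
    aeval Aᵀ p = (aeval A p)ᵀ := by
  induction p using Polynomial.induction_on' with
  | add p q hp hq => rw [map_add, map_add, Matrix.transpose_add, hp, hq]
  | monomial i a =>
      rw [aeval_monomial, aeval_monomial, Algebra.algebraMap_eq_smul_one]
      simp [Matrix.smul_mul, Matrix.mul_smul, Matrix.transpose_mul, Matrix.transpose_smul,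
        Matrix.transpose_pow, Matrix.transpose_one]

lemma lyap_ker {n : ℕ} (hn : 0 < n) (A0 P Q : Matrix (Fin n) (Fin n) ℝ)
    (hA : ∀ μ ∈ spectrum ℂ (A0.map (algebraMap ℝ ℂ)), μ.re < 0)
    (hP : P.PosSemidef) (hQ : Q.PosSemidef)
    (heq : A0 * P + P * A0ᵀ + Q = 0) (x : Fin n → ℝ) :
    P *ᵥ x = 0 ↔ ∀ s : ℕ, Q *ᵥ ((A0ᵀ) ^ s *ᵥ x) = 0 := by
  have hPsymm : Pᵀ = P := by
    rw [← Matrix.conjTranspose_eq_transpose_of_trivial]; exact hP.1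
  have hpow : ∀ (s : ℕ) (v : Fin n → ℝ), (A0ᵀ) ^ s *ᵥ (A0ᵀ *ᵥ v) = (A0ᵀ) ^ (s + 1) *ᵥ v := by
    intro s v
    rw [Matrix.mulVec_mulVec, ← pow_succ]
  have hpow' : ∀ (s : ℕ) (v : Fin n → ℝ), A0ᵀ *ᵥ ((A0ᵀ) ^ s *ᵥ v) = (A0ᵀ) ^ (s + 1) *ᵥ v := by
    intro s v
    rw [Matrix.mulVec_mulVec, ← pow_succ']
  constructor
  · intro h
    have key : ∀ v : Fin n → ℝ, P *ᵥ v = 0 → Q *ᵥ v = 0 ∧ P *ᵥ (A0ᵀ *ᵥ v) = 0 := by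
      intro v hv
      have h0 : A0 *ᵥ (P *ᵥ v) + P *ᵥ (A0ᵀ *ᵥ v) + Q *ᵥ v = 0 := by
        have := congrArg (fun W => W *ᵥ v) heq
        simpa [Matrix.add_mulVec, ← Matrix.mulVec_mulVec] using this
      rw [hv, Matrix.mulVec_zero, zero_add] at h0
      have hdot : v ⬝ᵥ ((P * A0ᵀ) *ᵥ v) = 0 := by
        rw [← Matrix.mulVec_mulVec, Matrix.dotProduct_mulVec, ← Matrix.mulVec_transpose,
          hPsymm, hv, zero_dotProduct]
      have hQv : v ⬝ᵥ (Q *ᵥ v) = 0 := by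
        have := congrArg (fun w => v ⬝ᵥ w) h0
        simpa [dotProduct_add, hdot] using this
      have hQv0 : Q *ᵥ v = 0 := by
        rw [← hQ.dotProduct_mulVec_zero_iff v]
        simpa using hQv
      refine ⟨hQv0, ?_⟩
      rwa [hQv0, add_zero] at h0
    have main : ∀ s : ℕ, P *ᵥ ((A0ᵀ) ^ s *ᵥ x) = 0 := by
      intro s
      induction s with
      | zero => simpa using h
      | succ s ih =>
          rw [← hpow']
          exact (key _ ih).2
    intro s
    exact (key _ (main s)).1
  · intro hx
    set Nsub : Submodule ℝ (Fin n → ℝ) :=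
      ⨅ s : ℕ, LinearMap.ker ((Q * (A0ᵀ) ^ s).mulVecLin) with hNsub
    have hmem : ∀ v : Fin n → ℝ, v ∈ Nsub ↔ ∀ s : ℕ, Q *ᵥ ((A0ᵀ) ^ s *ᵥ v) = 0 := by
      intro v
      simp [hNsub, Submodule.mem_iInf, LinearMap.mem_ker, Matrix.mulVecLin_apply,
        ← Matrix.mulVec_mulVec]
    have hNinv : ∀ v ∈ Nsub, A0ᵀ *ᵥ v ∈ Nsub := by
      intro v hv
      rw [hmem] at hv ⊢
      intro s
      rw [hpow]
      exact hv (s + 1)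
    set d := Module.finrank ℝ Nsub with hd
    set b : Module.Basis (Fin d) ℝ Nsub := Module.finBasis ℝ Nsub with hb
    set E : Matrix (Fin n) (Fin d) ℝ := Matrix.of (fun r c => (b c : Fin n → ℝ) r) with hE
    have hEmul : ∀ y : Fin d → ℝ, E *ᵥ y = ∑ c, y c • ((b c : Fin n → ℝ)) := by
      intro y
      funext r
      simp [hE, Matrix.mulVec, dotProduct, Finset.sum_apply, mul_comm]
    have hErepr : ∀ v : Nsub, E *ᵥ (b.repr v) = (v : Fin n → ℝ) := by
      intro v
      rw [hEmul]
      have h2 := congrArg (Nsub.subtype) (b.sum_repr v)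
      rw [map_sum] at h2
      simpa using h2
    set T : Matrix (Fin d) (Fin d) ℝ :=
      Matrix.of (fun i c => b.repr ⟨A0ᵀ *ᵥ (b c : Fin n → ℝ), hNinv _ (b c).2⟩ i) with hT
    have hTE : A0ᵀ * E = E * T := by
      ext r c
      have h1 : (A0ᵀ * E) r c = (A0ᵀ *ᵥ (b c : Fin n → ℝ)) r := by
        simp [hE, Matrix.mul_apply, Matrix.mulVec, dotProduct]
      have h2 : (E * T) r c = (E *ᵥ (fun i => T i c)) r := by
        simp [Matrix.mul_apply, Matrix.mulVec, dotProduct]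
      rw [h1, h2]
      have h3 : (fun i => T i c) =
          (b.repr ⟨A0ᵀ *ᵥ (b c : Fin n → ℝ), hNinv _ (b c).2⟩ : Fin d → ℝ) := rfl
      rw [h3, hErepr]
    have hinj : LinearMap.ker E.mulVecLin = ⊥ := by
      rw [LinearMap.ker_eq_bot']
      intro y hy
      rw [Matrix.mulVecLin_apply, hEmul] at hy
      have hcoe : ((∑ c, y c • b c : Nsub) : Fin n → ℝ) = ∑ c, y c • (b c : Fin n → ℝ) := by
        simp
      have hsum : (∑ c, y c • b c : Nsub) = 0 := by
        apply Subtype.ext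
        rw [hcoe]
        simpa using hy
      have := Fintype.linearIndependent_iff.mp b.linearIndependent y hsum
      funext c
      exact this c
    obtain ⟨g, hg⟩ := LinearMap.exists_leftInverse_of_injective E.mulVecLin hinj
    set F : Matrix (Fin d) (Fin n) ℝ := LinearMap.toMatrix' g with hF
    have hFE : F * E = 1 := by
      have h1 : LinearMap.toMatrix' (g.comp E.mulVecLin) =
          LinearMap.toMatrix' (LinearMap.id (R := ℝ) (M := Fin d → ℝ)) := by rw [hg]
      rw [LinearMap.toMatrix'_comp, ← Matrix.toLin'_apply', LinearMap.toMatrix'_toLin',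
        LinearMap.toMatrix'_id] at h1
      exact h1
    set M0 : Matrix (Fin d) (Fin d) ℝ := Eᵀ * P * E with hM0
    have hQE : Q * E = 0 := by
      ext r c
      have h1 : (Q * E) r c = (Q *ᵥ (b c : Fin n → ℝ)) r := by
        simp [hE, Matrix.mul_apply, Matrix.mulVec, dotProduct]
      rw [h1]
      have := ((hmem _).mp (b c).2) 0
      simp only [pow_zero, Matrix.one_mulVec] at this
      rw [this]
      rfl
    have hsylvacc : Tᵀ * M0 + M0 * T = 0 := by
      have e1 : Tᵀ * M0 = Eᵀ * (A0 * P) * E := by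
        rw [hM0, ← Matrix.mul_assoc, ← Matrix.mul_assoc, ← Matrix.transpose_mul, ← hTE,
          Matrix.transpose_mul, Matrix.transpose_transpose, Matrix.mul_assoc (Eᵀ) A0 P]
      have e2 : M0 * T = Eᵀ * (P * A0ᵀ) * E := by
        rw [hM0, Matrix.mul_assoc (Eᵀ * P) E T, ← hTE, ← Matrix.mul_assoc,
          Matrix.mul_assoc (Eᵀ) P A0ᵀ]
      rw [e1, e2, ← Matrix.add_mul, ← Matrix.mul_add]
      have hAP : A0 * P + P * A0ᵀ = -Q := add_eq_zero_iff_eq_neg.mp heq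
      rw [hAP, Matrix.mul_neg, Matrix.neg_mul, Matrix.mul_assoc, hQE, Matrix.mul_zero,
        neg_zero]
    have hqT : aeval T (A0.charpoly) = 0 := by
      have h1 : E * aeval T (A0.charpoly) = 0 := by
        rw [← intertwine_aeval hTE, aeval_transpose, Matrix.aeval_self_charpoly,
          Matrix.transpose_zero, Matrix.zero_mul]
      calc aeval T (A0.charpoly) = (F * E) * aeval T (A0.charpoly) := by
            rw [hFE, Matrix.one_mul]
        _ = F * (E * aeval T (A0.charpoly)) := by rw [Matrix.mul_assoc]
        _ = 0 := by rw [h1, Matrix.mul_zero]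
    have hdeg : 0 < (A0.charpoly).degree := by
      rw [Matrix.charpoly_degree_eq_dim]
      simp only [Fintype.card_fin]
      exact_mod_cast hn
    have hroots : ∀ μ : ℂ, ((A0.charpoly).map (algebraMap ℝ ℂ)).eval μ = 0 → μ.re < 0 := by
      intro μ hμ
      apply hA
      rw [mem_spectrum_iff_charpoly, Matrix.charpoly_map]
      exact hμ
    have hM00 : M0 = 0 := sylv T M0 (A0.charpoly) hqT hdeg hroots hsylvacc
    have hxN : x ∈ Nsub := (hmem x).mpr hx
    have hxy : E *ᵥ (b.repr ⟨x, hxN⟩) = x := hErepr ⟨x, hxN⟩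
    set y : Fin d → ℝ := ⇑(b.repr ⟨x, hxN⟩) with hy
    have hdot : x ⬝ᵥ (P *ᵥ x) = y ⬝ᵥ (M0 *ᵥ y) := by
      rw [hM0, ← hxy]
      calc (E *ᵥ y) ⬝ᵥ (P *ᵥ (E *ᵥ y))
          = (P *ᵥ (E *ᵥ y)) ⬝ᵥ (E *ᵥ y) := dotProduct_comm _ _
        _ = ((P *ᵥ (E *ᵥ y)) ᵥ* E) ⬝ᵥ y := by rw [← Matrix.dotProduct_mulVec]
        _ = (Eᵀ *ᵥ (P *ᵥ (E *ᵥ y))) ⬝ᵥ y := by rw [Matrix.mulVec_transpose]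
        _ = ((Eᵀ * P * E) *ᵥ y) ⬝ᵥ y := by
            rw [Matrix.mulVec_mulVec, Matrix.mulVec_mulVec]
        _ = y ⬝ᵥ ((Eᵀ * P * E) *ᵥ y) := dotProduct_comm _ _
    have hzero : x ⬝ᵥ (P *ᵥ x) = 0 := by
      rw [hdot, hM00, Matrix.zero_mulVec, dotProduct_zero]
    rw [← hP.dotProduct_mulVec_zero_iff x]
    simpa using hzero



lemma sum_mulVec {a b : ℕ} {ι : Type*} (s : Finset ι) (f : ι → Matrix (Fin a) (Fin b) ℝ)
    (v : Fin b → ℝ) : (∑ j ∈ s, f j) *ᵥ v = ∑ j ∈ s, f j *ᵥ v := by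
  ext r
  simp only [Matrix.mulVec, dotProduct, Finset.sum_apply, Matrix.sum_apply,
    Finset.sum_mul]
  rw [Finset.sum_comm]

lemma transpose_sum {a b : ℕ} {ι : Type*} (s : Finset ι) (f : ι → Matrix (Fin a) (Fin b) ℝ) :
    (∑ j ∈ s, f j)ᵀ = ∑ j ∈ s, (f j)ᵀ := by
  ext r c
  simp [Matrix.transpose_apply, Matrix.sum_apply]

lemma dotProduct_sum' {a : ℕ} {ι : Type*} (s : Finset ι) (v : Fin a → ℝ)
    (w : ι → Fin a → ℝ) : v ⬝ᵥ (∑ j ∈ s, w j) = ∑ j ∈ s, v ⬝ᵥ w j := by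
  simp only [dotProduct, Finset.sum_apply, Finset.mul_sum]
  rw [Finset.sum_comm]

lemma dotProduct_self_nonneg' {a : ℕ} (v : Fin a → ℝ) : 0 ≤ v ⬝ᵥ v :=
  Finset.sum_nonneg fun i _ => mul_self_nonneg _

lemma dot_mulVec_eq {a b : ℕ} (E : Matrix (Fin a) (Fin b) ℝ) (v : Fin a → ℝ) (w : Fin b → ℝ) :
    v ⬝ᵥ (E *ᵥ w) = (Eᵀ *ᵥ v) ⬝ᵥ w := by
  rw [Matrix.dotProduct_mulVec, ← Matrix.mulVec_transpose]

-- the first Lyapunov forcing matrix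
lemma Q1_psd {n m M : ℕ} (B : Fin M → Matrix (Fin n) (Fin m) ℝ) :
    (∑ j : Fin M, B j * (B j)ᵀ).PosSemidef := by
  apply Matrix.PosSemidef.of_dotProduct_mulVec_nonneg
  · show _ = _
    rw [Matrix.conjTranspose_eq_transpose_of_trivial, transpose_sum]
    congr 1
    funext j
    rw [Matrix.transpose_mul, Matrix.transpose_transpose]
  · intro x
    rw [star_trivial, sum_mulVec, dotProduct_sum' _ _ _]
    apply Finset.sum_nonneg
    intro j _
    rw [← Matrix.mulVec_mulVec, dot_mulVec_eq]
    exact dotProduct_self_nonneg' _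

lemma Q1_ker {n m M : ℕ} (B : Fin M → Matrix (Fin n) (Fin m) ℝ) (v : Fin n → ℝ) :
    (∑ j : Fin M, B j * (B j)ᵀ) *ᵥ v = 0 ↔ ∀ j, (B j)ᵀ *ᵥ v = 0 := by
  constructor
  · intro h
    have hterm : ∀ j : Fin M, v ⬝ᵥ ((B j * (B j)ᵀ) *ᵥ v) =
        ((B j)ᵀ *ᵥ v) ⬝ᵥ ((B j)ᵀ *ᵥ v) := by
      intro j
      rw [← Matrix.mulVec_mulVec, dot_mulVec_eq]
    have hdot : ∑ j : Fin M, ((B j)ᵀ *ᵥ v) ⬝ᵥ ((B j)ᵀ *ᵥ v) = 0 := by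
      have h2 : v ⬝ᵥ ((∑ j : Fin M, B j * (B j)ᵀ) *ᵥ v) = 0 := by
        rw [h, dotProduct_zero]
      rw [sum_mulVec, dotProduct_sum' _ _ _] at h2
      rw [← h2]
      exact Finset.sum_congr rfl fun j _ => (hterm j).symm
    intro j
    rw [← dotProduct_self_eq_zero]
    have := (Finset.sum_eq_zero_iff_of_nonneg
      (fun j _ => dotProduct_self_nonneg' ((B j)ᵀ *ᵥ v))).mp hdot
    exact this j (Finset.mem_univ j)
  · intro h
    rw [sum_mulVec]
    apply Finset.sum_eq_zero
    intro j _
    rw [← Matrix.mulVec_mulVec, h j, Matrix.mulVec_zero]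

lemma Q2_psd {n M : ℕ} (D : Fin M → Matrix (Fin n) (Fin n) ℝ)
    (Pk : Matrix (Fin n) (Fin n) ℝ) (hPk : Pk.PosSemidef) :
    (∑ j : Fin M, D j * Pk * (D j)ᵀ).PosSemidef := by
  have hPsymm : Pkᵀ = Pk := by
    rw [← Matrix.conjTranspose_eq_transpose_of_trivial]; exact hPk.1
  apply Matrix.PosSemidef.of_dotProduct_mulVec_nonneg
  · show _ = _
    rw [Matrix.conjTranspose_eq_transpose_of_trivial, transpose_sum]
    congr 1
    funext j
    rw [Matrix.transpose_mul, Matrix.transpose_mul, Matrix.transpose_transpose, hPsymm,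
      Matrix.mul_assoc]
  · intro x
    rw [star_trivial, sum_mulVec, dotProduct_sum' _ _ _]
    apply Finset.sum_nonneg
    intro j _
    rw [← Matrix.mulVec_mulVec, ← Matrix.mulVec_mulVec, dot_mulVec_eq]
    have := hPk.dotProduct_mulVec_nonneg ((D j)ᵀ *ᵥ x)
    simpa using this

lemma Q2_ker {n M : ℕ} (D : Fin M → Matrix (Fin n) (Fin n) ℝ)
    (Pk : Matrix (Fin n) (Fin n) ℝ) (hPk : Pk.PosSemidef) (v : Fin n → ℝ) :
    (∑ j : Fin M, D j * Pk * (D j)ᵀ) *ᵥ v = 0 ↔ ∀ j, Pk *ᵥ ((D j)ᵀ *ᵥ v) = 0 := by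
  constructor
  · intro h
    have hterm : ∀ j : Fin M, v ⬝ᵥ ((D j * Pk * (D j)ᵀ) *ᵥ v) =
        ((D j)ᵀ *ᵥ v) ⬝ᵥ (Pk *ᵥ ((D j)ᵀ *ᵥ v)) := by
      intro j
      rw [← Matrix.mulVec_mulVec, ← Matrix.mulVec_mulVec, dot_mulVec_eq]
    have hdot : ∑ j : Fin M, ((D j)ᵀ *ᵥ v) ⬝ᵥ (Pk *ᵥ ((D j)ᵀ *ᵥ v)) = 0 := by
      have h2 : v ⬝ᵥ ((∑ j : Fin M, D j * Pk * (D j)ᵀ) *ᵥ v) = 0 := by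
        rw [h, dotProduct_zero]
      rw [sum_mulVec, dotProduct_sum' _ _ _] at h2
      rw [← h2]
      exact Finset.sum_congr rfl fun j _ => (hterm j).symm
    intro j
    rw [← hPk.dotProduct_mulVec_zero_iff, star_trivial]
    have := (Finset.sum_eq_zero_iff_of_nonneg
      (fun j _ => by simpa using hPk.dotProduct_mulVec_nonneg ((D j)ᵀ *ᵥ v))).mp hdot
    exact this j (Finset.mem_univ j)
  · intro h
    rw [sum_mulVec]
    apply Finset.sum_eq_zero
    intro j _
    rw [← Matrix.mulVec_mulVec, ← Matrix.mulVec_mulVec, h j, Matrix.mulVec_zero]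

-- words with exactly k occurrences of D-factors
def Uset {n M : ℕ} (A0 : Matrix (Fin n) (Fin n) ℝ) (D : Fin M → Matrix (Fin n) (Fin n) ℝ) :
    ℕ → Set (Matrix (Fin n) (Fin n) ℝ)
  | 0 => {W | ∃ s : ℕ, W = A0 ^ s}
  | (k + 1) => {W | ∃ (s : ℕ) (j : Fin M), ∃ u ∈ Uset A0 D k, W = A0 ^ s * (D j * u)}

lemma Uset_one {n M : ℕ} (A0 : Matrix (Fin n) (Fin n) ℝ) (D : Fin M → Matrix (Fin n) (Fin n) ℝ) :
    (1 : Matrix (Fin n) (Fin n) ℝ) ∈ Uset A0 D 0 := ⟨0, (pow_zero A0).symm⟩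

lemma Uset_mulA {n M : ℕ} {A0 : Matrix (Fin n) (Fin n) ℝ} {D : Fin M → Matrix (Fin n) (Fin n) ℝ}
    {k : ℕ} {u : Matrix (Fin n) (Fin n) ℝ} (hu : u ∈ Uset A0 D k) :
    A0 * u ∈ Uset A0 D k := by
  cases k with
  | zero =>
      obtain ⟨s, rfl⟩ := hu
      exact ⟨s + 1, (pow_succ' A0 s).symm⟩
  | succ k =>
      obtain ⟨s, j, u', hu', rfl⟩ := hu
      exact ⟨s + 1, j, u', hu', by rw [← Matrix.mul_assoc, ← pow_succ']⟩

lemma Uset_mulD {n M : ℕ} {A0 : Matrix (Fin n) (Fin n) ℝ} {D : Fin M → Matrix (Fin n) (Fin n) ℝ}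
    {k : ℕ} {u : Matrix (Fin n) (Fin n) ℝ} (hu : u ∈ Uset A0 D k) (j : Fin M) :
    D j * u ∈ Uset A0 D (k + 1) :=
  ⟨0, j, u, hu, by rw [pow_zero, Matrix.one_mul]⟩

lemma list_to_Uset {n M : ℕ} {A0 : Matrix (Fin n) (Fin n) ℝ}
    {D : Fin M → Matrix (Fin n) (Fin n) ℝ} :
    ∀ L : List (Matrix (Fin n) (Fin n) ℝ),
      (∀ X ∈ L, X = A0 ∨ ∃ j, X = D j) → ∃ k, L.prod ∈ Uset A0 D k := by
  intro L
  induction L with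
  | nil => exact fun _ => ⟨0, by rw [List.prod_nil]; exact Uset_one A0 D⟩
  | cons X L ih =>
      intro hXL
      obtain ⟨k, hk⟩ := ih (fun Y hY => hXL Y (List.mem_cons_of_mem X hY))
      rcases hXL X (List.mem_cons_self) with hX | ⟨j, hX⟩
      · exact ⟨k, by rw [List.prod_cons, hX]; exact Uset_mulA hk⟩
      · exact ⟨k + 1, by rw [List.prod_cons, hX]; exact Uset_mulD hk j⟩

lemma Uset_to_list {n M : ℕ} {A0 : Matrix (Fin n) (Fin n) ℝ}
    {D : Fin M → Matrix (Fin n) (Fin n) ℝ} :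
    ∀ (k : ℕ) (u : Matrix (Fin n) (Fin n) ℝ), u ∈ Uset A0 D k →
      ∃ L : List (Matrix (Fin n) (Fin n) ℝ),
        (∀ X ∈ L, X = A0 ∨ ∃ j, X = D j) ∧ L.prod = u := by
  intro k
  induction k with
  | zero =>
      rintro u ⟨s, rfl⟩
      refine ⟨List.replicate s A0, ?_, List.prod_replicate s A0⟩
      intro X hX
      exact Or.inl (List.eq_of_mem_replicate hX)
  | succ k ih =>
      rintro u ⟨s, j, u', hu', rfl⟩
      obtain ⟨L, hL, hLprod⟩ := ih u' hu'
      refine ⟨List.replicate s A0 ++ (D j :: L), ?_, ?_⟩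
      · intro X hX
        rcases List.mem_append.mp hX with hX | hX
        · exact Or.inl (List.eq_of_mem_replicate hX)
        · rcases List.mem_cons.mp hX with hX | hX
          · exact Or.inr ⟨j, hX⟩
          · exact hL X hX
      · rw [List.prod_append, List.prod_cons, List.prod_replicate, hLprod]

-- perp criterion for fullness of a submodule
lemma top_iff_perp {n : ℕ} (p : Submodule ℝ (Fin n → ℝ)) :
    p = ⊤ ↔ ∀ x : Fin n → ℝ, (∀ v ∈ p, v ⬝ᵥ x = 0) → x = 0 := by
  constructor
  · intro hp x hx
    exact dotProduct_self_eq_zero.mp (hx x (hp ▸ Submodule.mem_top))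
  · intro h
    by_contra hne
    set e : EuclideanSpace ℝ (Fin n) ≃ₗ[ℝ] (Fin n → ℝ) :=
      WithLp.linearEquiv 2 ℝ (Fin n → ℝ) with he
    set p' : Submodule ℝ (EuclideanSpace ℝ (Fin n)) := p.comap (e : _ →ₗ[ℝ] _) with hp'
    have hp'top : p' ≠ ⊤ := by
      intro htop
      apply hne
      rw [eq_top_iff]
      intro v _
      have : e (e.symm v) ∈ p := by
        have : e.symm v ∈ p' := htop ▸ Submodule.mem_top
        simpa [hp'] using this
      simpa using this
    have horth : p'ᗮ ≠ ⊥ := fun hbot => hp'top (Submodule.orthogonal_eq_bot_iff.mp hbot)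
    obtain ⟨x', hx'mem, hx'ne⟩ := Submodule.exists_mem_ne_zero_of_ne_bot horth
    have hx0 : e x' = 0 := by
      apply h
      intro v hv
      have hsymm : e.symm v ∈ p' := by simpa [hp'] using hv
      have := (Submodule.mem_orthogonal p' x').mp hx'mem (e.symm v) hsymm
      simpa [PiLp.inner_apply, RCLike.inner_apply, dotProduct, mul_comm, he,
        WithLp.linearEquiv_apply, WithLp.linearEquiv_symm_apply]
        using this
    exact hx'ne (by simpa using congrArg e.symm hx0)


lemma Pk_ker {n m M : ℕ} (hn : 0 < n) (A0 : Matrix (Fin n) (Fin n) ℝ)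
    (hA : ∀ μ ∈ spectrum ℂ (A0.map (algebraMap ℝ ℂ)), μ.re < 0)
    (B : Fin M → Matrix (Fin n) (Fin m) ℝ) (D : Fin M → Matrix (Fin n) (Fin n) ℝ)
    (P : ℕ → Matrix (Fin n) (Fin n) ℝ)
    (hPpsd : ∀ k, (P k).PosSemidef)
    (hP1 : A0 * P 0 + P 0 * A0ᵀ + ∑ j : Fin M, B j * (B j)ᵀ = 0)
    (hPk : ∀ k : ℕ, A0 * P (k + 1) + P (k + 1) * A0ᵀ + ∑ j : Fin M, D j * P k * (D j)ᵀ = 0) :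
    ∀ (k : ℕ) (x : Fin n → ℝ), P k *ᵥ x = 0 ↔
      ∀ u ∈ Uset A0 D k, ∀ i : Fin M, (B i)ᵀ *ᵥ (uᵀ *ᵥ x) = 0 := by
  intro k
  induction k with
  | zero =>
      intro x
      rw [lyap_ker hn A0 (P 0) _ hA (hPpsd 0) (Q1_psd B) hP1 x]
      constructor
      · rintro h u ⟨s, rfl⟩ i
        rw [Matrix.transpose_pow]
        exact (Q1_ker B _).mp (h s) i
      · intro h s
        apply (Q1_ker B _).mpr
        intro j
        have := h (A0 ^ s) ⟨s, rfl⟩ j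
        rwa [Matrix.transpose_pow] at this
  | succ k ih =>
      intro x
      rw [lyap_ker hn A0 (P (k + 1)) _ hA (hPpsd (k + 1)) (Q2_psd D (P k) (hPpsd k))
        (hPk k) x]
      have hw : ∀ (s : ℕ) (j : Fin M) (u : Matrix (Fin n) (Fin n) ℝ),
          (A0 ^ s * (D j * u))ᵀ *ᵥ x = uᵀ *ᵥ ((D j)ᵀ *ᵥ ((A0ᵀ) ^ s *ᵥ x)) := by
        intro s j u
        rw [Matrix.transpose_mul, Matrix.transpose_mul, ← Matrix.transpose_pow,
          Matrix.mul_assoc, ← Matrix.mulVec_mulVec, ← Matrix.mulVec_mulVec]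
      constructor
      · rintro h u ⟨s, j, u', hu', rfl⟩ i
        rw [hw]
        exact (ih _).mp ((Q2_ker D (P k) (hPpsd k) _).mp (h s) j) u' hu' i
      · intro h s
        apply (Q2_ker D (P k) (hPpsd k) _).mpr
        intro j
        rw [ih]
        intro u hu i
        have := h (A0 ^ s * (D j * u)) ⟨s, j, u, hu, rfl⟩ i
        rwa [hw] at this

lemma words_transfer {n M : ℕ} (hM : 0 < M) (A D : Fin M → Matrix (Fin n) (Fin n) ℝ)
    (hD : ∀ j, D j = A j - A ⟨0, hM⟩)
    {V : Type*} [AddCommGroup V] [Module ℝ V] (φ : Matrix (Fin n) (Fin n) ℝ →ₗ[ℝ] V) :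
    (∀ L : List (Matrix (Fin n) (Fin n) ℝ), (∀ X ∈ L, X ∈ Set.range A) → φ L.prod = 0) ↔
    (∀ L : List (Matrix (Fin n) (Fin n) ℝ),
      (∀ X ∈ L, X = A ⟨0, hM⟩ ∨ ∃ j, X = D j) → φ L.prod = 0) := by
  set A0 := A ⟨0, hM⟩ with hA0
  set GA : Set (Matrix (Fin n) (Fin n) ℝ) :=
    {W | ∃ L : List (Matrix (Fin n) (Fin n) ℝ), (∀ X ∈ L, X ∈ Set.range A) ∧ W = L.prod}
    with hGA
  set Gcl : Set (Matrix (Fin n) (Fin n) ℝ) :=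
    {W | ∃ L : List (Matrix (Fin n) (Fin n) ℝ),
      (∀ X ∈ L, X = A0 ∨ ∃ j, X = D j) ∧ W = L.prod} with hGcl
  have hmulcl : ∀ (M0 : Matrix (Fin n) (Fin n) ℝ), (M0 = A0 ∨ ∃ j, M0 = D j) →
      ∀ W ∈ Submodule.span ℝ Gcl, M0 * W ∈ Submodule.span ℝ Gcl := by
    intro M0 hM0 W hW
    have hle : Submodule.span ℝ Gcl ≤
        Submodule.comap (LinearMap.mulLeft ℝ M0) (Submodule.span ℝ Gcl) := by
      rw [Submodule.span_le]
      rintro W' ⟨L, hL, rfl⟩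
      apply Submodule.subset_span
      refine ⟨M0 :: L, ?_, (List.prod_cons).symm⟩
      intro X hX
      rcases List.mem_cons.mp hX with rfl | h
      · exact hM0
      · exact hL X h
    exact hle hW
  have hmulA : ∀ (M0 : Matrix (Fin n) (Fin n) ℝ), M0 ∈ Set.range A →
      ∀ W ∈ Submodule.span ℝ GA, M0 * W ∈ Submodule.span ℝ GA := by
    intro M0 hM0 W hW
    have hle : Submodule.span ℝ GA ≤
        Submodule.comap (LinearMap.mulLeft ℝ M0) (Submodule.span ℝ GA) := by
      rw [Submodule.span_le]
      rintro W' ⟨L, hL, rfl⟩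
      apply Submodule.subset_span
      refine ⟨M0 :: L, ?_, (List.prod_cons).symm⟩
      intro X hX
      rcases List.mem_cons.mp hX with rfl | h
      · exact hM0
      · exact hL X h
    exact hle hW
  have hAtoCl : ∀ L : List (Matrix (Fin n) (Fin n) ℝ), (∀ X ∈ L, X ∈ Set.range A) →
      L.prod ∈ Submodule.span ℝ Gcl := by
    intro L
    induction L with
    | nil =>
        intro _
        exact Submodule.subset_span ⟨[], by simp, rfl⟩
    | cons X L ihL =>
        intro hXL
        have htail := ihL (fun Y hY => hXL Y (List.mem_cons_of_mem X hY))
        obtain ⟨j, rfl⟩ := hXL X (List.mem_cons_self)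
        rw [List.prod_cons]
        have hAj : A j = D j + A0 := by rw [hD j, sub_add_cancel]
        rw [hAj, Matrix.add_mul]
        exact Submodule.add_mem _ (hmulcl (D j) (Or.inr ⟨j, rfl⟩) _ htail)
          (hmulcl A0 (Or.inl rfl) _ htail)
  have hClToA : ∀ L : List (Matrix (Fin n) (Fin n) ℝ),
      (∀ X ∈ L, X = A0 ∨ ∃ j, X = D j) → L.prod ∈ Submodule.span ℝ GA := by
    intro L
    induction L with
    | nil =>
        intro _
        exact Submodule.subset_span ⟨[], by simp, rfl⟩
    | cons X L ihL =>
        intro hXL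
        have htail := ihL (fun Y hY => hXL Y (List.mem_cons_of_mem X hY))
        rw [List.prod_cons]
        rcases hXL X (List.mem_cons_self) with rfl | ⟨j, rfl⟩
        · exact hmulA A0 ⟨⟨0, hM⟩, rfl⟩ _ htail
        · rw [hD j, Matrix.sub_mul]
          exact Submodule.sub_mem _ (hmulA (A j) ⟨j, rfl⟩ _ htail)
            (hmulA A0 ⟨⟨0, hM⟩, rfl⟩ _ htail)
  constructor
  · intro h L hL
    have hker : Submodule.span ℝ GA ≤ LinearMap.ker φ := by
      rw [Submodule.span_le]
      rintro W ⟨L', hL', rfl⟩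
      exact h L' hL'
    exact hker (hClToA L hL)
  · intro h L hL
    have hker : Submodule.span ℝ Gcl ≤ LinearMap.ker φ := by
      rw [Submodule.span_le]
      rintro W ⟨L', hL', rfl⟩
      exact h L' hL'
    exact hker (hAtoCl L hL)


end Aux

open Matrix

theorem range_gramian_top_iff_completely_reachable
    {n m M : ℕ} (hM : 0 < M)
    (A : Fin M → Matrix (Fin n) (Fin n) ℝ)
    (B : Fin M → Matrix (Fin n) (Fin m) ℝ)
    (hA : IsHurwitz (A ⟨0, hM⟩))
    (D : Fin M → Matrix (Fin n) (Fin n) ℝ)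
    (hD : ∀ j, D j = A j - A ⟨0, hM⟩)
    (P : ℕ → Matrix (Fin n) (Fin n) ℝ)
    -- `P 0` plays the role of `P₁`, etc.
    (hP1psd : (P 0).PosSemidef)
    (hP1 : A ⟨0, hM⟩ * P 0 + P 0 * (A ⟨0, hM⟩)ᵀ + ∑ j : Fin M, B j * (B j)ᵀ = 0)
    (hPkpsd : ∀ k : ℕ, (P (k + 1)).PosSemidef)
    (hPk : ∀ k : ℕ,
      A ⟨0, hM⟩ * P (k + 1) + P (k + 1) * (A ⟨0, hM⟩)ᵀ +
        ∑ j : Fin M, D j * P k * (D j)ᵀ = 0)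
    (S : Matrix (Fin n) (Fin n) ℝ) (hS : HasSum P S)
    -- the reachability subspace
    (R : Submodule ℝ (Fin n → ℝ))
    (hR : R = ⨆ (L : List (Matrix (Fin n) (Fin n) ℝ))
        (_ : ∀ X ∈ L, X ∈ Set.range A) (i : Fin M),
        LinearMap.range ((L.prod * B i).mulVecLin)) :
    LinearMap.range S.mulVecLin = ⊤ ↔ R = ⊤ := by
  rcases Nat.eq_zero_or_pos n with hn | hn
  · subst hn
    have htriv : ∀ (p : Submodule ℝ (Fin 0 → ℝ)), p = ⊤ := by
      intro p
      ext v
      simp only [Submodule.mem_top, iff_true]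
      exact (Subsingleton.elim (0 : Fin 0 → ℝ) v) ▸ p.zero_mem
    exact iff_of_true (htriv _) (htriv _)
  set A0 : Matrix (Fin n) (Fin n) ℝ := A ⟨0, hM⟩ with hA0
  have hPpsd : ∀ k, (P k).PosSemidef := by
    intro k
    cases k with
    | zero => exact hP1psd
    | succ k => exact hPkpsd k
  -- evaluation of the sum
  have hSx : ∀ x : Fin n → ℝ, HasSum (fun k => P k *ᵥ x) (S *ᵥ x) := by
    intro x
    let φ : Matrix (Fin n) (Fin n) ℝ →ₗ[ℝ] (Fin n → ℝ) :=
      { toFun := fun W => W *ᵥ x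
        map_add' := fun W₁ W₂ => Matrix.add_mulVec _ _ _
        map_smul' := fun c W => by simp [Matrix.smul_mulVec] }
    exact hS.map φ.toAddMonoidHom φ.continuous_of_finiteDimensional
  have hSdot : ∀ x : Fin n → ℝ, HasSum (fun k => x ⬝ᵥ (P k *ᵥ x)) (x ⬝ᵥ (S *ᵥ x)) := by
    intro x
    let ψ : Matrix (Fin n) (Fin n) ℝ →ₗ[ℝ] ℝ :=
      { toFun := fun W => x ⬝ᵥ (W *ᵥ x)
        map_add' := fun W₁ W₂ => by
          simp [Matrix.add_mulVec, dotProduct_add]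
        map_smul' := fun c W => by
          simp [Matrix.smul_mulVec, dotProduct_smul] }
    exact hS.map ψ.toAddMonoidHom ψ.continuous_of_finiteDimensional
  have hker : ∀ x : Fin n → ℝ, S *ᵥ x = 0 ↔ ∀ k, P k *ᵥ x = 0 := by
    intro x
    constructor
    · intro hx k
      have hsum := hSdot x
      rw [hx, dotProduct_zero] at hsum
      have hnonneg : ∀ j : ℕ, 0 ≤ x ⬝ᵥ (P j *ᵥ x) := by
        intro j
        have := (hPpsd j).dotProduct_mulVec_nonneg x
        simpa using this
      have hle : x ⬝ᵥ (P k *ᵥ x) ≤ 0 := le_hasSum hsum k (fun j _ => hnonneg j)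
      have hzero : x ⬝ᵥ (P k *ᵥ x) = 0 := le_antisymm hle (hnonneg k)
      rw [← (hPpsd k).dotProduct_mulVec_zero_iff x]
      simpa using hzero
    · intro h
      have h0 : (fun k => P k *ᵥ x) = fun _ => (0 : Fin n → ℝ) := funext h
      have := hSx x
      rw [h0] at this
      exact this.unique hasSum_zero
  -- linear functional-type characterizations
  have φlin : ∀ (i : Fin M) (x : Fin n → ℝ),
      ∃ φ : Matrix (Fin n) (Fin n) ℝ →ₗ[ℝ] (Fin m → ℝ),
        ∀ W, φ W = (B i)ᵀ *ᵥ (Wᵀ *ᵥ x) := by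
    intro i x
    refine ⟨{ toFun := fun W => (B i)ᵀ *ᵥ (Wᵀ *ᵥ x)
              map_add' := fun W₁ W₂ => by
                simp [Matrix.transpose_add, Matrix.add_mulVec, Matrix.mulVec_add]
              map_smul' := fun c W => by
                simp [Matrix.transpose_smul, Matrix.smul_mulVec,
                  Matrix.mulVec_smul] }, fun W => rfl⟩
  -- step 1: range S = ⊤ iff S has trivial kernel
  have h1 : LinearMap.range S.mulVecLin = ⊤ ↔ ∀ x : Fin n → ℝ, S *ᵥ x = 0 → x = 0 := by
    rw [LinearMap.range_eq_top]
    constructor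
    · intro hsurj x hx
      have hinj := LinearMap.injective_iff_surjective.mpr hsurj
      apply hinj
      simpa [Matrix.mulVecLin_apply] using hx
    · intro h
      apply LinearMap.injective_iff_surjective.mp
      intro x y hxy
      have : S *ᵥ (x - y) = 0 := by
        rw [Matrix.mulVec_sub]
        rw [show S.mulVecLin x = S *ᵥ x from rfl, show S.mulVecLin y = S *ᵥ y from rfl] at hxy
        rw [hxy, sub_self]
      have := h _ this
      exact sub_eq_zero.mp this
  -- step 2: the perp of R
  have h2 : ∀ x : Fin n → ℝ, (∀ v ∈ R, v ⬝ᵥ x = 0) ↔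
      ∀ L : List (Matrix (Fin n) (Fin n) ℝ), (∀ X ∈ L, X ∈ Set.range A) →
        ∀ i : Fin M, (B i)ᵀ *ᵥ ((L.prod)ᵀ *ᵥ x) = 0 := by
    intro x
    constructor
    · intro h L hL i
      set w : Fin m → ℝ := (B i)ᵀ *ᵥ ((L.prod)ᵀ *ᵥ x) with hwdef
      have hwmem : (L.prod * B i) *ᵥ w ∈ R := by
        rw [hR]
        have hle : LinearMap.range ((L.prod * B i).mulVecLin) ≤
            ⨆ (L' : List (Matrix (Fin n) (Fin n) ℝ))
              (_ : ∀ X ∈ L', X ∈ Set.range A) (i' : Fin M),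
              LinearMap.range ((L'.prod * B i').mulVecLin) := by
          have t1 := le_iSup (fun (i' : Fin M) =>
            LinearMap.range ((L.prod * B i').mulVecLin)) i
          have t2 := le_iSup (fun (_ : ∀ X ∈ L, X ∈ Set.range A) =>
            ⨆ (i' : Fin M), LinearMap.range ((L.prod * B i').mulVecLin)) hL
          have t3 := le_iSup (fun (L' : List (Matrix (Fin n) (Fin n) ℝ)) =>
            ⨆ (_ : ∀ X ∈ L', X ∈ Set.range A) (i' : Fin M),
              LinearMap.range ((L'.prod * B i').mulVecLin)) L
          exact le_trans (le_trans t1 t2) t3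
        exact hle ⟨w, rfl⟩
      have hperp := h _ hwmem
      -- ((L.prod * B i) *ᵥ w) ⬝ᵥ x = w ⬝ᵥ w
      have hcalc : ((L.prod * B i) *ᵥ w) ⬝ᵥ x = w ⬝ᵥ w := by
        rw [dotProduct_comm, Aux.dot_mulVec_eq, Matrix.transpose_mul,
          ← Matrix.mulVec_mulVec]
      rw [hcalc] at hperp
      exact dotProduct_self_eq_zero.mp hperp
    · intro h v hv
      -- R ≤ ker of the dot-with-x functional
      let ℓ : (Fin n → ℝ) →ₗ[ℝ] ℝ :=
        { toFun := fun u => u ⬝ᵥ x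
          map_add' := fun u₁ u₂ => add_dotProduct _ _ _
          map_smul' := fun c u => by simp [smul_dotProduct] }
      have hle : R ≤ LinearMap.ker ℓ := by
        rw [hR]
        apply iSup_le
        intro L
        apply iSup_le
        intro hL
        apply iSup_le
        intro i
        rintro v' ⟨y, rfl⟩
        show ((L.prod * B i) *ᵥ y) ⬝ᵥ x = 0
        rw [dotProduct_comm, Aux.dot_mulVec_eq, Matrix.transpose_mul,
          ← Matrix.mulVec_mulVec, h L hL i, zero_dotProduct]
      exact hle hv
  -- step 3: kernels of all P k = words condition (over A0/D alphabet)
  have h3 : ∀ x : Fin n → ℝ, (∀ k, P k *ᵥ x = 0) ↔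
      ∀ L : List (Matrix (Fin n) (Fin n) ℝ), (∀ X ∈ L, X = A0 ∨ ∃ j, X = D j) →
        ∀ i : Fin M, (B i)ᵀ *ᵥ ((L.prod)ᵀ *ᵥ x) = 0 := by
    intro x
    have hPker := Aux.Pk_ker hn A0 hA B D P hPpsd hP1 hPk
    constructor
    · intro hk L hL i
      obtain ⟨k, hU⟩ := Aux.list_to_Uset L hL
      exact (hPker k x).mp (hk k) L.prod hU i
    · intro hw k
      rw [hPker k x]
      intro u hu i
      obtain ⟨L, hL, hLprod⟩ := Aux.Uset_to_list k u hu
      rw [← hLprod]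
      exact hw L hL i
  -- put everything together
  rw [h1, Aux.top_iff_perp R]
  constructor
  · intro hS' x hx
    apply hS' x
    rw [hker]
    rw [h3]
    intro L hL i
    obtain ⟨φ, hφ⟩ := φlin i x
    have := (Aux.words_transfer hM A D hD φ).mp (by
      intro L' hL'
      rw [hφ]
      exact (h2 x).mp hx L' hL' i) L hL
    rw [hφ] at this
    exact this
  · intro hR' x hx
    apply hR' x
    rw [h2]
    intro L hL i
    obtain ⟨φ, hφ⟩ := φlin i x
    have := (Aux.words_transfer hM A D hD φ).mpr (by
      intro L' hL'
      rw [hφ]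
      exact (h3 x).mp ((hker x).mp hx) L' hL' i) L hL
    rw [hφ] at this
    exact this
end

section
/- Let A_1, …, A_M be real n×n matrices, set A := A_1 and D_j := A_j − A_1 (so D_1 = 0), and let B_1, …, B_M be real n×m matrices. Let P be a symmetric positive semidefinite n×n matrix satisfying A·P + P·Aᵀ + ∑_{j=1}^{M} (D_j·P·D_jᵀ + B_j·B_jᵀ) = 0, and assume that for every k ∈ {2,…,M} the matrix ∑_{j=1}^{M} D_j·P·D_jᵀ + ∑_{j≠k} B_j·B_jᵀ − (D_k·P + P·D_kᵀ) is positive semidefinite. Then for every k ∈ {1,…,M} the matrix −(A_k·P + P·A_kᵀ + B_k·B_kᵀ) is positive semidefinite. -/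
/-!
Writing `A k = A₁ + D k` and eliminating `A₁ P + P A₁ᵀ` with the Lyapunov equation turns
`-(A k P + P A kᵀ + B k B kᵀ)` into exactly the matrix of the `k`-th LMI. For the first mode
`D₁ = 0`, and that matrix is `∑ D j P D jᵀ + ∑_{j ≠ 1} B j B jᵀ`, a sum of congruences of `P`
and Gramians, hence positive semidefinite.
-/

open Matrix

theorem neg_mode_lyapunov_eq_lmi {ι n m R : Type*} [Fintype ι] [DecidableEq ι] [Fintype n]
    [Fintype m] [Ring R] (A D : ι → Matrix n n R) (B : ι → Matrix n m R)
    (A₁ P : Matrix n n R) {k : ι} (hDk : D k = A k - A₁)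
    (hP : A₁ * P + P * A₁ᵀ + ∑ j, (D j * P * (D j)ᵀ + B j * (B j)ᵀ) = 0) :
    -(A k * P + P * (A k)ᵀ + B k * (B k)ᵀ) =
      ∑ j, D j * P * (D j)ᵀ + ∑ j ∈ Finset.univ.erase k, B j * (B j)ᵀ -
        (D k * P + P * (D k)ᵀ) := by
  have hAk : A k = A₁ + D k := by rw [hDk]; abel
  have hGram : ∑ j ∈ Finset.univ.erase k, B j * (B j)ᵀ = ∑ j, B j * (B j)ᵀ - B k * (B k)ᵀ := by
    rw [eq_sub_iff_add_eq, Finset.sum_erase_add _ _ (Finset.mem_univ k)]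
  rw [Finset.sum_add_distrib] at hP
  rw [hGram, hAk, transpose_add, add_mul, mul_add, eq_sub_of_add_eq (eq_neg_of_add_eq_zero_left hP)]
  abel

theorem posSemidef_sum_congr_add_sum_gram {ι n m : Type*} [Fintype ι] [Fintype n] [Fintype m]
    {P : Matrix n n ℝ} (hP : P.PosSemidef) (D : ι → Matrix n n ℝ) (B : ι → Matrix n m ℝ)
    (s : Finset ι) :
    (∑ j, D j * P * (D j)ᵀ + ∑ j ∈ s, B j * (B j)ᵀ).PosSemidef := by
  refine (posSemidef_sum _ fun j _ => ?_).add (posSemidef_sum _ fun j _ => ?_)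
  · simpa using hP.mul_mul_conjTranspose_same (D j)
  · simpa using posSemidef_self_mul_conjTranspose (B j)

theorem lmi_gramians_of_generalized_lyapunov
    {n m M : ℕ} (hM : 0 < M)
    (A : Fin M → Matrix (Fin n) (Fin n) ℝ)
    (B : Fin M → Matrix (Fin n) (Fin m) ℝ)
    (D : Fin M → Matrix (Fin n) (Fin n) ℝ)
    (hD : ∀ j, D j = A j - A ⟨0, hM⟩)
    (P : Matrix (Fin n) (Fin n) ℝ) (hPpsd : P.PosSemidef)
    (hP : A ⟨0, hM⟩ * P + P * (A ⟨0, hM⟩)ᵀ +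
      ∑ j : Fin M, (D j * P * (D j)ᵀ + B j * (B j)ᵀ) = 0)
    (hLMI : ∀ k : Fin M, k ≠ ⟨0, hM⟩ →
      (∑ j : Fin M, D j * P * (D j)ᵀ +
        ∑ j ∈ Finset.univ.erase k, B j * (B j)ᵀ -
        (D k * P + P * (D k)ᵀ)).PosSemidef) :
    ∀ k : Fin M, (-(A k * P + P * (A k)ᵀ + B k * (B k)ᵀ)).PosSemidef := by
  intro k
  rw [neg_mode_lyapunov_eq_lmi A D B _ P (hD k) hP]
  by_cases hk : k = ⟨0, hM⟩
  · have hD₁ : D k = 0 := by rw [hD k, hk, sub_self]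
    rw [hD₁, zero_mul, transpose_zero, mul_zero, add_zero, sub_zero]
    exact posSemidef_sum_congr_add_sum_gram hPpsd D B _
  · exact hLMI k hk
end

section
/- Let A_1, …, A_M be real n×n Hurwitz matrices and B_1, …, B_M real n×m matrices. For each k ∈ {1,…,M}, let P_k be the unique symmetric positive semidefinite solution of A_k·P_k + P_k·A_kᵀ + B_k·B_kᵀ = 0, and set P_avg := ∑_{k=1}^{M} P_k. Then the range of P_avg is contained in the reachability subspace R. -/
/-!
The reachability subspace `R` contains the range of every `B k` and is invariant under every
`A k`. Hence the matrices with range in `R` form a subspace which contains `B k * (B k)ᵀ` and is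
invariant under the Lyapunov operator `X ↦ A k * X + X * (A k)ᵀ`. As `A k` is Hurwitz, `A k` and
`-(A k)ᵀ` have disjoint spectra, so this operator is injective (Sylvester), hence bijective on that
finite-dimensional invariant subspace. Its solution `P k` of `A k * X + X * (A k)ᵀ = -B k * (B k)ᵀ`
therefore has range in `R`, and so has the sum of the `P k`.
-/

open Matrix

open Polynomial

theorem Matrix.aeval_mul_eq_mul_aeval_of_mul_eq {K : Type*} [CommRing K]
    {n p : Type*} [Fintype n] [DecidableEq n] [Fintype p] [DecidableEq p]
    {A : Matrix n n K} {B : Matrix p p K} {X : Matrix n p K} (h : A * X = X * B) (q : K[X]) :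
    aeval A q * X = X * aeval B q := by
  have hpow (k : ℕ) : A ^ k * X = X * B ^ k := by
    induction k with
    | zero => rw [pow_zero, pow_zero, Matrix.one_mul, Matrix.mul_one]
    | succ k ih => rw [pow_succ, pow_succ, Matrix.mul_assoc, h, ← Matrix.mul_assoc, ih,
        Matrix.mul_assoc]
  induction q using Polynomial.induction_on' with
  | add q r hq hr => rw [map_add, map_add, Matrix.add_mul, Matrix.mul_add, hq, hr]
  | monomial k r =>
    rw [aeval_monomial, Algebra.algebraMap_eq_smul_one, smul_mul_assoc, one_mul, aeval_monomial,
      Algebra.algebraMap_eq_smul_one, smul_mul_assoc, one_mul, Matrix.smul_mul, hpow,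
      Matrix.mul_smul]

theorem Matrix.eq_zero_of_mul_eq_mul_of_disjoint_spectrum {K : Type*} [Field K] [IsAlgClosed K]
    {n p : Type*} [Fintype n] [DecidableEq n] [Fintype p] [DecidableEq p]
    {A : Matrix n n K} {B : Matrix p p K} {X : Matrix n p K}
    (hAB : Disjoint (spectrum K A) (spectrum K B)) (h : A * X = X * B) : X = 0 := by
  cases isEmpty_or_nonempty n
  · exact Subsingleton.elim _ _
  -- `charpoly A` kills `A`, and is invertible at `B` because it has no root in `spectrum K B`.
  have hunit : IsUnit (aeval B A.charpoly) := by
    have hdeg : 0 < A.charpoly.degree := by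
      rw [charpoly_degree_eq_dim]
      exact_mod_cast Fintype.card_pos
    rw [← spectrum.zero_notMem_iff K, spectrum.map_polynomial_aeval_of_degree_pos B _ hdeg]
    rintro ⟨μ, hμB, hroot⟩
    exact hAB.notMem_of_mem_right hμB (mem_spectrum_iff_isRoot_charpoly.mpr hroot)
  rw [← mul_nonsing_inv_cancel_right _ X ((isUnit_iff_isUnit_det _).mp hunit),
    ← aeval_mul_eq_mul_aeval_of_mul_eq h, aeval_self_charpoly, Matrix.zero_mul, Matrix.zero_mul]

theorem IsHurwitz.disjoint_spectrum_neg_transpose {n : ℕ} {A : Matrix (Fin n) (Fin n) ℝ}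
    (hA : IsHurwitz A) :
    Disjoint (spectrum ℂ (A.map (algebraMap ℝ ℂ))) (spectrum ℂ (-(A.map (algebraMap ℝ ℂ))ᵀ)) := by
  rw [Set.disjoint_left]
  intro μ hμ hμ'
  rw [← spectrum.neg_eq, Set.mem_neg, mem_spectrum_iff_isRoot_charpoly, charpoly_transpose,
    ← mem_spectrum_iff_isRoot_charpoly] at hμ'
  have hneg := hA _ hμ'
  rw [Complex.neg_re] at hneg
  linarith [hA _ hμ]

theorem IsHurwitz.eq_zero_of_mul_add_mul_transpose_eq_zero {n : ℕ}
    {A X : Matrix (Fin n) (Fin n) ℝ} (hA : IsHurwitz A) (h : A * X + X * Aᵀ = 0) : X = 0 := by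
  have hC : A.map (algebraMap ℝ ℂ) * X.map (algebraMap ℝ ℂ)
      = X.map (algebraMap ℝ ℂ) * -(A.map (algebraMap ℝ ℂ))ᵀ := by
    rw [mul_neg, ← transpose_map, ← Matrix.map_mul, ← Matrix.map_mul,
      ← Matrix.map_neg _ (map_neg _), eq_neg_of_add_eq_zero_left h]
  have := Matrix.eq_zero_of_mul_eq_mul_of_disjoint_spectrum hA.disjoint_spectrum_neg_transpose hC
  exact Matrix.map_injective (RingHom.injective (algebraMap ℝ ℂ))
    (this.trans (Matrix.map_zero _ (map_zero _)).symm)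

theorem Submodule.mem_of_apply_mem_of_injective {K V : Type*} [DivisionRing K] [AddCommGroup V]
    [Module K V] [FiniteDimensional K V] {T : V →ₗ[K] V} (hT : Function.Injective T)
    {S : Submodule K V} (hS : ∀ x ∈ S, T x ∈ S) {x : V} (hx : T x ∈ S) : x ∈ S := by
  have hTS_inj : Function.Injective (T.restrict hS) := fun y z hyz =>
    Subtype.ext (hT (congrArg Subtype.val hyz))
  obtain ⟨y, hy⟩ := LinearMap.injective_iff_surjective.mp hTS_inj ⟨T x, hx⟩
  exact hT (congrArg Subtype.val hy) ▸ y.2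

def Submodule.matricesWithRangeIn {K n : Type*} [CommRing K] [Fintype n]
    (W : Submodule K (n → K)) (p : Type*) [Fintype p] : Submodule K (Matrix n p K) where
  carrier := {X | ∀ v, X *ᵥ v ∈ W}
  add_mem' hX hY v := by
    rw [add_mulVec]
    exact W.add_mem (hX v) (hY v)
  zero_mem' v := by
    rw [zero_mulVec]
    exact W.zero_mem
  smul_mem' c X hX v := by
    rw [smul_mulVec]
    exact W.smul_mem c (hX v)

section Reachability

variable {K : Type*} [CommRing K] {n m ι κ : Type*} [Fintype n] [DecidableEq n] [Fintype m]
variable (A : κ → Matrix n n K) (B : ι → Matrix n m K)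

def reachabilitySubspace : Submodule K (n → K) :=
  ⨆ (L : List (Matrix n n K)) (_ : ∀ X ∈ L, X ∈ Set.range A) (i : ι),
    LinearMap.range ((L.prod * B i).mulVecLin)

theorem range_mulVecLin_le_reachabilitySubspace {L : List (Matrix n n K)}
    (hL : ∀ X ∈ L, X ∈ Set.range A) (i : ι) :
    LinearMap.range (L.prod * B i).mulVecLin ≤ reachabilitySubspace A B :=
  le_iSup_of_le L <| le_iSup_of_le hL <|
    le_iSup (fun i => LinearMap.range (L.prod * B i).mulVecLin) i

theorem mulVec_mem_reachabilitySubspace (i : ι) (v : m → K) :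
    B i *ᵥ v ∈ reachabilitySubspace A B := by
  have := range_mulVecLin_le_reachabilitySubspace A B (L := []) (by simp) i
  rw [List.prod_nil, Matrix.one_mul] at this
  exact this ⟨v, rfl⟩

theorem mulVec_mem_reachabilitySubspace_of_mem (k : κ) {v : n → K}
    (hv : v ∈ reachabilitySubspace A B) : A k *ᵥ v ∈ reachabilitySubspace A B := by
  suffices (reachabilitySubspace A B).map (A k).mulVecLin ≤ reachabilitySubspace A B from
    this ⟨v, hv, rfl⟩
  simp only [reachabilitySubspace, Submodule.map_iSup, iSup_le_iff]
  intro L hL i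
  rw [← LinearMap.range_comp, ← mulVecLin_mul, ← Matrix.mul_assoc, ← List.prod_cons]
  refine range_mulVecLin_le_reachabilitySubspace A B (fun X hX => ?_) i
  rcases List.mem_cons.mp hX with rfl | hX
  exacts [⟨k, rfl⟩, hL X hX]

end Reachability

theorem IsHurwitz.mulVec_mem_of_mul_add_mul_transpose_eq {n : ℕ}
    {A P Q : Matrix (Fin n) (Fin n) ℝ} (hA : IsHurwitz A) {W : Submodule ℝ (Fin n → ℝ)}
    (hAW : ∀ v ∈ W, A *ᵥ v ∈ W) (hQW : ∀ v, Q *ᵥ v ∈ W) (hP : A * P + P * Aᵀ = Q)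
    (v : Fin n → ℝ) : P *ᵥ v ∈ W := by
  let T := LinearMap.mulLeft ℝ A + LinearMap.mulRight ℝ Aᵀ
  have hT : Function.Injective T :=
    (injective_iff_map_eq_zero T).mpr fun X hX => hA.eq_zero_of_mul_add_mul_transpose_eq_zero hX
  have hTW : ∀ X ∈ W.matricesWithRangeIn (Fin n), T X ∈ W.matricesWithRangeIn (Fin n) := by
    intro X hX v
    simp only [T, LinearMap.add_apply, LinearMap.mulLeft_apply, LinearMap.mulRight_apply,
      add_mulVec, ← mulVec_mulVec]
    exact W.add_mem (hAW _ (hX v)) (hX _)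
  refine Submodule.mem_of_apply_mem_of_injective hT hTW ?_ v
  change ∀ w, (A * P + P * Aᵀ) *ᵥ w ∈ W
  rwa [hP]

theorem range_average_gramian_le_reachability_subspace_general
    {n m M : ℕ}
    (A : Fin M → Matrix (Fin n) (Fin n) ℝ)
    (B : Fin M → Matrix (Fin n) (Fin m) ℝ)
    (hA : ∀ k, IsHurwitz (A k))
    (P : Fin M → Matrix (Fin n) (Fin n) ℝ)
    (hP : ∀ k, A k * P k + P k * (A k)ᵀ + B k * (B k)ᵀ = 0)
    -- the reachability subspace
    (R : Submodule ℝ (Fin n → ℝ))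
    (hR : R = ⨆ (L : List (Matrix (Fin n) (Fin n) ℝ))
        (_ : ∀ X ∈ L, X ∈ Set.range A) (i : Fin M),
        LinearMap.range ((L.prod * B i).mulVecLin)) :
    LinearMap.range (∑ k : Fin M, P k).mulVecLin ≤ R := by
  obtain rfl : R = reachabilitySubspace A B := hR
  rintro _ ⟨v, rfl⟩
  rw [mulVecLin_apply, sum_mulVec]
  refine Submodule.sum_mem _ fun k _ => (hA k).mulVec_mem_of_mul_add_mul_transpose_eq
    (fun _ => mulVec_mem_reachabilitySubspace_of_mem A B k) (fun w => ?_)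
    (eq_neg_of_add_eq_zero_left (hP k)) v
  rw [neg_mulVec, ← mulVec_mulVec]
  exact neg_mem (mulVec_mem_reachabilitySubspace A B k _)

theorem range_average_gramian_le_reachability_subspace
    {n m M : ℕ}
    (A : Fin M → Matrix (Fin n) (Fin n) ℝ)
    (B : Fin M → Matrix (Fin n) (Fin m) ℝ)
    (hA : ∀ k, IsHurwitz (A k))
    (P : Fin M → Matrix (Fin n) (Fin n) ℝ)
    (hPpsd : ∀ k, (P k).PosSemidef)
    (hP : ∀ k, A k * P k + P k * (A k)ᵀ + B k * (B k)ᵀ = 0)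
    -- the reachability subspace
    (R : Submodule ℝ (Fin n → ℝ))
    (hR : R = ⨆ (L : List (Matrix (Fin n) (Fin n) ℝ))
        (_ : ∀ X ∈ L, X ∈ Set.range A) (i : Fin M),
        LinearMap.range ((L.prod * B i).mulVecLin)) :
    LinearMap.range (∑ k : Fin M, P k).mulVecLin ≤ R :=
  range_average_gramian_le_reachability_subspace_general A B hA P hP R hR
end

section
/- Let A_1, …, A_M be real n×n matrices, B_1, …, B_M real n×m matrices, and let Σ = diag(σ_1, …, σ_n) be a diagonal matrix with σ_1 ≥ σ_2 ≥ … ≥ σ_n > 0. Assume that for every k ∈ {1,…,M} the matrix −(A_k·Σ + Σ·A_kᵀ + B_k·B_kᵀ) is positive definite. Let 1 ≤ r ≤ n, let Â_k denote the top-left r×r submatrix of A_k, and let Σ_1 = diag(σ_1,…,σ_r). Then for every k ∈ {1,…,M} the matrix −(Â_k·Σ_1 + Σ_1·Â_kᵀ) is positive definite; in particular there exists a positive definite r×r matrix P̂ (namely P̂ = Σ_1⁻¹) with Â_kᵀ·P̂ + P̂·Â_k negative definite for all k, i.e. the reduced linear switched system is quadratically stable. -/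
/-!
Cutting the Lyapunov inequality `A Σ + Σ Aᵀ + B Bᵀ < 0` down to the leading `r × r` block gives
`Â Σ₁ + Σ₁ Âᵀ < 0`, because dropping `B Bᵀ ≥ 0` keeps the inequality and, `Σ` being diagonal, the
truncated expression is a principal submatrix of the full one. Congruence by `Σ₁⁻¹` then turns
this into `Âᵀ Σ₁⁻¹ + Σ₁⁻¹ Â < 0`, so `Σ₁⁻¹` is a common quadratic Lyapunov matrix.
-/

open Matrix

namespace Matrix

variable {ι κ R : Type*}

lemma submatrix_mul_diagonal_add_diagonal_mul_transpose [Fintype ι] [Fintype κ]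
    [DecidableEq ι] [DecidableEq κ] [Semiring R] (A : Matrix ι ι R) (σ : ι → R) (e : κ → ι) :
    A.submatrix e e * diagonal (σ ∘ e) + diagonal (σ ∘ e) * (A.submatrix e e)ᵀ =
      (A * diagonal σ + diagonal σ * Aᵀ).submatrix e e := by
  ext i j
  simp [mul_diagonal, diagonal_mul]

lemma PosDef.neg_of_neg_add_posSemidef [Fintype ι] [Ring R] [PartialOrder R] [StarRing R]
    [AddLeftMono R] {X Y : Matrix ι ι R} (h : (-(X + Y)).PosDef) (hY : Y.PosSemidef) :
    (-X).PosDef := by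
  simpa using h.add_posSemidef hY

lemma inv_mul_mul_add_mul_mul_inv [Fintype ι] [DecidableEq ι] [CommRing R]
    {S : Matrix ι ι R} (hS : IsUnit S) (A A' : Matrix ι ι R) :
    S⁻¹ * (A * S + S * A') * S⁻¹ = S⁻¹ * A + A' * S⁻¹ := by
  have hS' : IsUnit S.det := (isUnit_iff_isUnit_det S).mp hS
  simp only [Matrix.mul_add, Matrix.add_mul, Matrix.mul_assoc, mul_nonsing_inv _ hS',
    Matrix.mul_one]
  rw [← Matrix.mul_assoc S⁻¹ S, nonsing_inv_mul _ hS', Matrix.one_mul]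

lemma PosDef.neg_transpose_mul_inv_add_inv_mul [Fintype ι] [DecidableEq ι]
    {S A : Matrix ι ι ℝ} (hS : S.IsHermitian) (hSu : IsUnit S)
    (h : (-(A * S + S * Aᵀ)).PosDef) : (-(Aᵀ * S⁻¹ + S⁻¹ * A)).PosDef := by
  have hSinv : star S⁻¹ = S⁻¹ := hS.inv.eq
  rw [← (isUnit_nonsing_inv_iff.mpr hSu).posDef_star_left_conjugate_iff, hSinv] at h
  rwa [Matrix.mul_neg, Matrix.neg_mul, inv_mul_mul_add_mul_mul_inv hSu, add_comm] at h

end Matrix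

theorem balanced_truncation_quadratic_stability_general
    {n m M : ℕ}
    (A : Fin M → Matrix (Fin n) (Fin n) ℝ)
    (B : Fin M → Matrix (Fin n) (Fin m) ℝ)
    (σ : Fin n → ℝ) (hσpos : ∀ i, 0 < σ i)
    (hLyap : ∀ k : Fin M,
      (-(A k * diagonal σ + diagonal σ * (A k)ᵀ + B k * (B k)ᵀ)).PosDef)
    (r : ℕ) (hrn : r ≤ n) :
    (∀ k : Fin M,
      (-((A k).submatrix (Fin.castLE hrn) (Fin.castLE hrn) *
            diagonal (σ ∘ Fin.castLE hrn) +
          diagonal (σ ∘ Fin.castLE hrn) *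
            ((A k).submatrix (Fin.castLE hrn) (Fin.castLE hrn))ᵀ)).PosDef) ∧
    ∃ Phat : Matrix (Fin r) (Fin r) ℝ, Phat.PosDef ∧
      Phat = (diagonal (σ ∘ Fin.castLE hrn))⁻¹ ∧
      ∀ k : Fin M,
        (-(((A k).submatrix (Fin.castLE hrn) (Fin.castLE hrn))ᵀ * Phat +
            Phat * (A k).submatrix (Fin.castLE hrn) (Fin.castLE hrn))).PosDef := by
  have hS₁ : (diagonal (σ ∘ Fin.castLE hrn)).PosDef := PosDef.diagonal fun i => hσpos _
  have hreduced : ∀ k : Fin M,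
      (-((A k).submatrix (Fin.castLE hrn) (Fin.castLE hrn) * diagonal (σ ∘ Fin.castLE hrn) +
        diagonal (σ ∘ Fin.castLE hrn) *
          ((A k).submatrix (Fin.castLE hrn) (Fin.castLE hrn))ᵀ)).PosDef := by
    intro k
    have hgram : (B k * (B k)ᵀ).PosSemidef := by
      simpa using posSemidef_self_mul_conjTranspose (B k)
    rw [submatrix_mul_diagonal_add_diagonal_mul_transpose]
    exact ((hLyap k).neg_of_neg_add_posSemidef hgram).submatrix (Fin.castLE_injective hrn)
  exact ⟨hreduced, _, hS₁.inv, rfl, fun k =>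
    (hreduced k).neg_transpose_mul_inv_add_inv_mul hS₁.isHermitian hS₁.isUnit⟩

theorem balanced_truncation_quadratic_stability
    {n m M : ℕ}
    (A : Fin M → Matrix (Fin n) (Fin n) ℝ)
    (B : Fin M → Matrix (Fin n) (Fin m) ℝ)
    (σ : Fin n → ℝ) (hσpos : ∀ i, 0 < σ i) (hσmono : Antitone σ)
    (hLyap : ∀ k : Fin M,
      (-(A k * diagonal σ + diagonal σ * (A k)ᵀ + B k * (B k)ᵀ)).PosDef)
    (r : ℕ) (hr : 1 ≤ r) (hrn : r ≤ n) :
    (∀ k : Fin M,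
      (-((A k).submatrix (Fin.castLE hrn) (Fin.castLE hrn) *
            diagonal (σ ∘ Fin.castLE hrn) +
          diagonal (σ ∘ Fin.castLE hrn) *
            ((A k).submatrix (Fin.castLE hrn) (Fin.castLE hrn))ᵀ)).PosDef) ∧
    ∃ Phat : Matrix (Fin r) (Fin r) ℝ, Phat.PosDef ∧
      Phat = (diagonal (σ ∘ Fin.castLE hrn))⁻¹ ∧
      ∀ k : Fin M,
        (-(((A k).submatrix (Fin.castLE hrn) (Fin.castLE hrn))ᵀ * Phat +
            Phat * (A k).submatrix (Fin.castLE hrn) (Fin.castLE hrn))).PosDef :=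
  balanced_truncation_quadratic_stability_general A B σ hσpos hLyap r hrn
end
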